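/- arXiv:1412.7044 — 6 statements merged into one kernel-verified Lean document; each statement's English description precedes it below -/
import Mathlib

section
/- Let (b_n)_{n≥1} be a sequence of real numbers with b_n = O(n^α) for some α > 0, such that b_n ≥ 0 for all but finitely many n, and such that for every negative integer ν the series ∑_{n≥1} b_n n^{-ν} converges to 0 (i.e., ∑_{n≥1} b_n n^{|ν|} = 0 for all positive integers |ν|). Then b_n = 0 for all n ≥ 1. -/
private lemma aux_le_zero {c A r : ℝ} (hr0 : 0 ≤ r) (hr1 : r < 1)
    (h : ∀ m : ℕ, 1 ≤ m → c ≤ A * r ^ m) : c ≤ 0 := by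
  have hlim : Filter.Tendsto (fun m : ℕ => A * r ^ m) Filter.atTop (nhds 0) := by
    have := tendsto_pow_atTop_nhds_zero_of_lt_one hr0 hr1
    simpa using this.const_mul A
  exact ge_of_tendsto hlim (Filter.eventually_atTop.2 ⟨1, h⟩)

private lemma aux_ratio {c A x y : ℝ} (hy : 0 ≤ y) (hxy : y < x)
    (h : ∀ m : ℕ, 1 ≤ m → c * x ^ m ≤ A * y ^ m) : c ≤ 0 := by
  have hx : 0 < x := lt_of_le_of_lt hy hxy
  refine aux_le_zero (A := A) (r := y / x) (div_nonneg hy hx.le)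
    (by rw [div_lt_one hx]; exact hxy) ?_
  intro m hm
  rw [div_pow, ← mul_div_assoc, le_div_iff₀ (pow_pos hx m)]
  exact h m hm

/-- If `b n = O(n^α)`, `b n ≥ 0` for all but finitely many `n`, and for every positive
integer `m` the (absolutely convergent) series `∑_{n ≥ 1} b n * n ^ m` equals `0`,
then `b n = 0` for all `n ≥ 1`. -/
theorem stmt0 (b : ℕ → ℝ) (α : ℝ) (hα : 0 < α)
    (hO : ∃ C : ℝ, ∀ n : ℕ, 1 ≤ n → |b n| ≤ C * (n : ℝ) ^ α)
    (hnn : ∃ N₀ : ℕ, ∀ n : ℕ, N₀ ≤ n → 0 ≤ b n)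
    (hsum : ∀ m : ℕ, 1 ≤ m → Summable (fun n : ℕ => b (n + 1) * ((n : ℝ) + 1) ^ m))
    (hzero : ∀ m : ℕ, 1 ≤ m → ∑' n : ℕ, b (n + 1) * ((n : ℝ) + 1) ^ m = 0) :
    ∀ n : ℕ, 1 ≤ n → b n = 0 := by
  obtain ⟨N₀, hN₀⟩ := hnn
  set N := max N₀ 1 with hNdef
  have hNN₀ : N₀ ≤ N := le_max_left _ _
  have hN1 : 1 ≤ N := le_max_right _ _
  -- Step A: b n = 0 for all n > N
  have stepA : ∀ n, N < n → b n = 0 := by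
    intro n hn
    have hbn : 0 ≤ b n := hN₀ n (hNN₀.trans hn.le)
    have hle : b n ≤ 0 := by
      refine aux_ratio (c := b n) (A := ∑ i ∈ Finset.range N, |b (i + 1)|)
        (x := (n : ℝ)) (y := (N : ℝ)) (by positivity) (by exact_mod_cast hn) ?_
      intro m hm
      set f : ℕ → ℝ := fun k => b (k + 1) * ((k : ℝ) + 1) ^ m with hf
      have hsf : Summable f := hsum m hm
      have htail : Summable fun k => f (k + N) := (summable_nat_add_iff N).2 hsf
      have hsplit := Summable.sum_add_tsum_nat_add N hsf
      rw [hzero m hm] at hsplit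
      have htail0 : ∑' k, f (k + N) = -∑ i ∈ Finset.range N, f i := by linarith
      obtain ⟨k, rfl⟩ : ∃ k, n = N + k + 1 := by
        refine ⟨n - N - 1, by omega⟩
      have hterm : f (k + N) ≤ ∑' j, f (j + N) := by
        refine Summable.le_tsum htail k ?_
        intro j _
        refine mul_nonneg (hN₀ _ (by omega)) (by positivity)
      have hhead : -∑ i ∈ Finset.range N, f i
          ≤ (∑ i ∈ Finset.range N, |b (i + 1)|) * (N : ℝ) ^ m := by
        rw [← Finset.sum_neg_distrib, Finset.sum_mul]
        refine Finset.sum_le_sum ?_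
        intro i hi
        have hiN : (i : ℝ) + 1 ≤ (N : ℝ) := by
          have := Finset.mem_range.1 hi
          exact_mod_cast Nat.succ_le_of_lt this
        have h1 : -(f i) ≤ |b (i + 1)| * ((i : ℝ) + 1) ^ m := by
          calc -(f i) ≤ |f i| := neg_le_abs _
            _ = |b (i + 1)| * |((i : ℝ) + 1) ^ m| := abs_mul _ _
            _ = |b (i + 1)| * ((i : ℝ) + 1) ^ m := by
                rw [abs_of_nonneg (show (0:ℝ) ≤ ((i:ℝ)+1)^m by positivity)]
        refine h1.trans ?_
        exact mul_le_mul_of_nonneg_left (pow_le_pow_left₀ (by positivity) hiN m)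
          (abs_nonneg _)
      have hfval : f (k + N) = b (N + k + 1) * ((N + k + 1 : ℕ) : ℝ) ^ m := by
        simp only [hf]
        congr 2
        · omega
        · push_cast; ring
      rw [← hfval]
      exact hterm.trans (htail0 ▸ hhead)
    linarith
  -- Step B: downward induction
  have key : ∀ d : ℕ, ∀ n : ℕ, 1 ≤ n → N + 1 - d ≤ n → b n = 0 := by
    intro d
    induction d with
    | zero => intro n h1 h2; exact stepA n (by omega)
    | succ d ih =>
      intro n h1 h2
      by_cases hc : N + 1 - d ≤ n
      · exact ih n h1 hc
      · push_neg at hc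
        -- all b (k+1) for k ≥ n vanish
        have hvanish : ∀ k : ℕ, n ≤ k → b (k + 1) = 0 := by
          intro k hk
          exact ih (k + 1) (by omega) (by omega)
        obtain ⟨p, rfl⟩ : ∃ p, n = p + 1 := ⟨n - 1, by omega⟩
        have hbz : b (p + 1) = 0 := by
          have hab : |b (p + 1)| ≤ 0 := by
            refine aux_ratio (c := |b (p + 1)|)
              (A := ∑ i ∈ Finset.range p, |b (i + 1)|)
              (x := ((p : ℝ) + 1)) (y := (p : ℝ)) (by positivity) (by linarith) ?_
            intro m hm
            set f : ℕ → ℝ := fun k => b (k + 1) * ((k : ℝ) + 1) ^ m with hf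
            have hfin : ∑ k ∈ Finset.range (p + 1), f k = 0 := by
              rw [← hzero m hm]
              refine (tsum_eq_sum ?_).symm
              intro k hk
              have hk' : p + 1 ≤ k := by
                simp [Finset.mem_range] at hk; omega
              simp only [hf]
              rw [hvanish k (by omega), zero_mul]
            rw [Finset.sum_range_succ] at hfin
            have heq : f p = -∑ k ∈ Finset.range p, f k := by linarith
            have h1 : |f p| ≤ ∑ k ∈ Finset.range p, |f k| := by
              rw [heq, abs_neg]
              exact Finset.abs_sum_le_sum_abs _ _
            have h2 : ∑ k ∈ Finset.range p, |f k|
                ≤ (∑ i ∈ Finset.range p, |b (i + 1)|) * (p : ℝ) ^ m := by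
              rw [Finset.sum_mul]
              refine Finset.sum_le_sum ?_
              intro i hi
              have hip : (i : ℝ) + 1 ≤ (p : ℝ) := by
                have := Finset.mem_range.1 hi
                exact_mod_cast Nat.succ_le_of_lt this
              calc |f i| = |b (i + 1)| * |((i : ℝ) + 1) ^ m| := abs_mul _ _
                _ = |b (i + 1)| * ((i : ℝ) + 1) ^ m := by
                    rw [abs_of_nonneg (show (0:ℝ) ≤ ((i:ℝ)+1)^m by positivity)]
                _ ≤ |b (i + 1)| * (p : ℝ) ^ m :=
                    mul_le_mul_of_nonneg_left
                      (pow_le_pow_left₀ (by positivity) hip m) (abs_nonneg _)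
            have h3 : |b (p + 1)| * ((p : ℝ) + 1) ^ m = |f p| := by
              simp only [hf]
              rw [abs_mul, abs_of_nonneg (show (0:ℝ) ≤ ((p:ℝ)+1)^m by positivity)]
            rw [h3]
            exact h1.trans h2
          exact abs_eq_zero.mp (le_antisymm hab (abs_nonneg _))
        exact hbz
  intro n h1
  exact key N n h1 (by omega)
end

section
/- Let (b_n)_{n≥1} be real numbers, and let m_1 < m_2 < ... < m_t be exactly the indices where b_n < 0. Suppose b_n ≥ 0 for all other n, and suppose that for every positive integer m the sum ∑_{n≥1} b_n n^{m} converges and equals 0. Then b_n = 0 for all n > m_t. -/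
/-- If `S` (a nonempty finite set of indices `≥ 1`) consists exactly of those `n ≥ 1`
with `b n < 0`, and for every positive integer `m` the series `∑_{n ≥ 1} b n * n ^ m`
converges to `0`, then `b n = 0` for all `n` beyond the largest element of `S`. -/
theorem stmt1 (b : ℕ → ℝ) (S : Finset ℕ) (hS : S.Nonempty)
    (hS1 : ∀ n ∈ S, 1 ≤ n)
    (hneg : ∀ n : ℕ, 1 ≤ n → (b n < 0 ↔ n ∈ S))
    (hsum : ∀ m : ℕ, 1 ≤ m → Summable (fun n : ℕ => b (n + 1) * ((n : ℝ) + 1) ^ m))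
    (hzero : ∀ m : ℕ, 1 ≤ m → ∑' n : ℕ, b (n + 1) * ((n : ℝ) + 1) ^ m = 0) :
    ∀ n : ℕ, S.max' hS < n → b n = 0 := by
  intro n hn
  set M := S.max' hS with hM
  have hM1 : 1 ≤ M := hS1 M (S.max'_mem hS)
  have hn1 : 1 ≤ n := le_trans hM1 hn.le
  have hnS : n ∉ S := fun h => absurd (S.le_max' n h) (not_le.mpr hn)
  have hbn : 0 ≤ b n := by
    by_contra h
    exact hnS ((hneg n hn1).mp (lt_of_not_ge h))
  rcases hbn.lt_or_eq with hpos | h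
  · exfalso
    set C := ∑ j ∈ S, (-b j) with hC
    have key : ∀ m : ℕ, 1 ≤ m → b n * (n : ℝ) ^ m ≤ C * (M : ℝ) ^ m := by
      intro m hm
      set f : ℕ → ℝ := fun k => b (k + 1) * ((k : ℝ) + 1) ^ m with hf
      have hfs : Summable f := hsum m hm
      set s : Finset ℕ := S.image (· - 1) with hs
      set g : ℕ → ℝ := fun k => if (k + 1) ∈ S then f k else 0 with hg
      have hg0 : ∀ k ∉ s, g k = 0 := by
        intro k hk
        simp only [hg]
        rw [if_neg]
        intro hkS
        exact hk (Finset.mem_image.mpr ⟨k + 1, hkS, by omega⟩)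
      have hgs : Summable g := summable_of_ne_finset_zero hg0
      have hgsum : ∑' k, g k = ∑ j ∈ S, b j * (j : ℝ) ^ m := by
        rw [tsum_eq_sum hg0, hs,
          Finset.sum_image (fun x hx y hy hxy => by
            have := hS1 x hx; have := hS1 y hy; omega)]
        refine Finset.sum_congr rfl (fun j hj => ?_)
        have hj1 : 1 ≤ j := hS1 j hj
        have hj2 : j - 1 + 1 = j := by omega
        simp only [hg, hf, hj2, if_pos hj]
        have : ((j - 1 : ℕ) : ℝ) + 1 = (j : ℝ) := by
          push_cast [hj1]; ring
        rw [this]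
      set h : ℕ → ℝ := fun k => f k - g k with hh
      have hhs : Summable h := hfs.sub hgs
      have hhnn : ∀ k, 0 ≤ h k := by
        intro k
        simp only [hh, hg]
        by_cases hk : (k + 1) ∈ S
        · simp [hk]
        · rw [if_neg hk, sub_zero, hf]
          have hb : 0 ≤ b (k + 1) := by
            by_contra hc
            exact hk ((hneg (k + 1) (by omega)).mp (lt_of_not_ge hc))
          positivity
      have hhsum : ∑' k, h k = -∑ j ∈ S, b j * (j : ℝ) ^ m := by
        rw [hh]
        calc ∑' k, (f k - g k) = (∑' k, f k) - ∑' k, g k := Summable.tsum_sub hfs hgs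
          _ = -∑ j ∈ S, b j * (j : ℝ) ^ m := by
              rw [hzero m hm, hgsum, zero_sub]
      have hle : h (n - 1) ≤ ∑' k, h k := Summable.le_tsum hhs (n - 1) (fun j _ => hhnn j)
      have hn2 : n - 1 + 1 = n := by omega
      have hval : h (n - 1) = b n * (n : ℝ) ^ m := by
        simp only [hh, hg, hf, hn2, if_neg hnS, sub_zero]
        have : ((n - 1 : ℕ) : ℝ) + 1 = (n : ℝ) := by push_cast [hn1]; ring
        rw [this]
      have hbound : -∑ j ∈ S, b j * (j : ℝ) ^ m ≤ C * (M : ℝ) ^ m := by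
        rw [hC, Finset.sum_mul, ← Finset.sum_neg_distrib]
        refine Finset.sum_le_sum (fun j hj => ?_)
        have hbj : -b j > 0 := by
          have := (hneg j (hS1 j hj)).mpr hj; linarith
        have hjM : (j : ℝ) ≤ (M : ℝ) := by
          exact_mod_cast S.le_max' j hj
        have : (j : ℝ) ^ m ≤ (M : ℝ) ^ m :=
          pow_le_pow_left₀ (by positivity) hjM m
        rw [neg_mul_eq_neg_mul]
        exact mul_le_mul_of_nonneg_left this hbj.le
      rw [← hval]
      exact hle.trans (hhsum.le.trans hbound)
    have hMpos : (0 : ℝ) < (M : ℝ) := by exact_mod_cast hM1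
    have hratio : (1 : ℝ) < (n : ℝ) / (M : ℝ) := by
      rw [lt_div_iff₀ hMpos, one_mul]
      exact_mod_cast hn
    obtain ⟨m, hm⟩ := pow_unbounded_of_one_lt (C / b n) hratio
    have hm' : C / b n < ((n : ℝ) / (M : ℝ)) ^ (m + 1) :=
      hm.trans_le (pow_le_pow_right₀ hratio.le (Nat.le_succ m))
    rw [div_pow, div_lt_div_iff₀ hpos (by positivity)] at hm'
    have := key (m + 1) (by omega)
    nlinarith [this, hm']
  · exact h.symm
end

section
/- Let (a_n)_{n≥1} be a sequence of real numbers such that a_n ≥ 0 for all n > T, a_n = O(n^α), and ∑_{n≥1} a_n e^{-n/x} = O(x^{r+ε}) for every ε > 0 as x → ∞. If moreover for every c with 0 < c < k and every constant α₁ > 0 there exist arbitrarily large x₀ with ∑_{T < n ≤ x₀} a_n² ≥ α₁ x₀^c, and α + r < k, then we obtain a contradiction; hence no such sequence exists. -/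
open Finset

set_option maxHeartbeats 2000000 in
/-- The contradiction step of Theorem 2: a sequence which is eventually nonnegative,
polynomially bounded, whose smoothed sums satisfy `∑ a_n e^{-n/x} = O(x^{r+ε})` for
all `ε > 0`, but whose partial sums of squares exceed `α₁ x₀^c` for arbitrarily large
`x₀` for every `0 < c < k` and `α₁ > 0`, with `α + r < k`, cannot exist. -/
theorem stmt3 (a : ℕ → ℝ) (T : ℕ) (α r k : ℝ) (hr : 0 ≤ r) (hk : 0 < k)
    (hpos : ∀ n : ℕ, T < n → 0 ≤ a n)
    (hO : ∃ C : ℝ, ∀ n : ℕ, 1 ≤ n → |a n| ≤ C * (n : ℝ) ^ α)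
    (hexp : ∀ ε : ℝ, 0 < ε → ∃ C : ℝ, ∀ x : ℝ, 1 ≤ x →
      |∑' n : ℕ, a (n + 1) * Real.exp (-((n : ℝ) + 1) / x)| ≤ C * x ^ (r + ε))
    (hlow : ∀ c : ℝ, 0 < c → c < k → ∀ α₁ : ℝ, 0 < α₁ → ∀ x : ℝ, ∃ x₀ : ℝ, x < x₀ ∧
      α₁ * x₀ ^ c ≤ ∑ n ∈ Finset.Icc (T + 1) ⌊x₀⌋₊, (a n) ^ 2)
    (hark : α + r < k) : False := by

  obtain ⟨C, hC⟩ := hO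
  have hC0 : 0 ≤ C := by
    have := hC 1 le_rfl
    simp [Real.one_rpow] at this
    exact le_trans (abs_nonneg _) this
  -- choose ε
  set ε : ℝ := min ((k - (α + r)) / 2) (k / 2) with hεdef
  have hε : 0 < ε := lt_min (by linarith) (by linarith)
  set e : ℝ := max (α + r + ε) ε with hedef
  have he_pos : 0 < e := lt_of_lt_of_le hε (le_max_right _ _)
  have he_k : e < k := by
    apply max_lt
    · have : ε ≤ (k - (α + r)) / 2 := min_le_left _ _
      linarith
    · have : ε ≤ k / 2 := min_le_right _ _
      linarith
  have he_α : α ≤ e := le_trans (by linarith) (le_max_left (α + r + ε) ε)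
  have he_αrε : α + r + ε ≤ e := le_max_left _ _
  obtain ⟨Cε, hCε⟩ := hexp ε hε
  have hCε0 : 0 ≤ Cε := by
    have := hCε 1 le_rfl
    rw [Real.one_rpow, mul_one] at this
    exact le_trans (abs_nonneg _) this
  set BT : ℝ := ∑ n ∈ Finset.Icc 1 T, |a n| with hBTdef
  have hBT0 : 0 ≤ BT := Finset.sum_nonneg fun n _ => abs_nonneg _
  -- summability of the smoothed series
  set m : ℕ := ⌈α⌉₊ with hmdef
  have hαm : α ≤ (m : ℝ) := Nat.le_ceil α
  have hsum : ∀ x : ℝ, 1 ≤ x →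
      Summable (fun n : ℕ => a (n + 1) * Real.exp (-((n : ℝ) + 1) / x)) := by
    intro x hx
    have hx0 : 0 < x := lt_of_lt_of_le one_pos hx
    set ρ : ℝ := Real.exp (-1 / x) with hρdef
    have hρ0 : 0 < ρ := Real.exp_pos _
    have hρ1 : ρ < 1 := by
      rw [Real.exp_lt_one_iff]
      exact div_neg_of_neg_of_pos (by norm_num) hx0
    have hs : Summable (fun n : ℕ => C * ((n : ℝ) ^ m * ρ ^ n)) := by
      apply Summable.mul_left
      apply summable_pow_mul_geometric_of_norm_lt_one
      rw [Real.norm_eq_abs, abs_of_pos hρ0]; exact hρ1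
    have hs' : Summable (fun n : ℕ => C * (((n : ℝ) + 1) ^ m * ρ ^ (n + 1))) := by
      have := (summable_nat_add_iff 1).2 hs
      apply this.congr
      intro n
      push_cast
      ring
    apply Summable.of_norm_bounded hs'
    intro n
    rw [Real.norm_eq_abs, abs_mul, abs_of_pos (Real.exp_pos _)]
    have h1 : |a (n + 1)| ≤ C * ((n : ℝ) + 1) ^ α := by
      have := hC (n + 1) (by omega)
      push_cast at this ⊢
      exact this
    have h2 : ((n : ℝ) + 1) ^ α ≤ ((n : ℝ) + 1) ^ (m : ℝ) := by
      apply Real.rpow_le_rpow_of_exponent_le (by linarith [Nat.cast_nonneg (α := ℝ) n]) hαm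
    have h3 : Real.exp (-((n : ℝ) + 1) / x) = ρ ^ (n + 1) := by
      rw [hρdef, ← Real.exp_nat_mul]
      congr 1
      push_cast
      ring
    rw [h3]
    calc |a (n + 1)| * ρ ^ (n + 1) ≤ (C * ((n : ℝ) + 1) ^ α) * ρ ^ (n + 1) := by
          apply mul_le_mul_of_nonneg_right h1 (pow_nonneg hρ0.le _)
      _ ≤ (C * ((n : ℝ) + 1) ^ (m : ℝ)) * ρ ^ (n + 1) := by
          apply mul_le_mul_of_nonneg_right _ (pow_nonneg hρ0.le _)
          exact mul_le_mul_of_nonneg_left h2 hC0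
      _ = C * (((n : ℝ) + 1) ^ m * ρ ^ (n + 1)) := by
          rw [Real.rpow_natCast]; ring
  -- partial sum bound
  set K₁ : ℝ := Real.exp 1 * Cε with hK₁def
  set K₂ : ℝ := Real.exp 1 * BT with hK₂def
  have hK₁0 : 0 ≤ K₁ := mul_nonneg (Real.exp_pos 1).le hCε0
  have hK₂0 : 0 ≤ K₂ := mul_nonneg (Real.exp_pos 1).le hBT0
  have hS : ∀ x : ℝ, 1 ≤ x →
      ∑ n ∈ Finset.Icc (T + 1) ⌊x⌋₊, a n ≤ K₁ * x ^ (r + ε) + K₂ := by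
    intro x hx
    have hx0 : 0 < x := lt_of_lt_of_le one_pos hx
    set g : ℕ → ℝ := fun n => a n * Real.exp (-(n : ℝ) / x) with hgdef
    have hgnn : ∀ n : ℕ, T < n → 0 ≤ g n := fun n hn =>
      mul_nonneg (hpos n hn) (Real.exp_pos _).le
    have hgsum : Summable (fun n : ℕ => g (n + 1)) := by
      apply (hsum x hx).congr
      intro n
      simp only [hgdef]
      push_cast
      ring_nf
    -- step 1
    have step1 : ∑ n ∈ Finset.Icc (T + 1) ⌊x⌋₊, a n ≤
        Real.exp 1 * ∑ n ∈ Finset.Icc (T + 1) ⌊x⌋₊, g n := by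
      rw [Finset.mul_sum]
      apply Finset.sum_le_sum
      intro n hn
      rw [Finset.mem_Icc] at hn
      have hnT : T < n := hn.1
      have hnx : (n : ℝ) ≤ x := by
        calc (n : ℝ) ≤ (⌊x⌋₊ : ℝ) := Nat.cast_le.2 hn.2
          _ ≤ x := Nat.floor_le hx0.le
      have h1 : (1 : ℝ) ≤ Real.exp 1 * Real.exp (-(n : ℝ) / x) := by
        rw [← Real.exp_add]
        apply Real.one_le_exp
        have : (n : ℝ) / x ≤ 1 := (div_le_one hx0).2 hnx
        rw [neg_div]
        linarith
      calc a n = a n * 1 := (mul_one _).symm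
        _ ≤ a n * (Real.exp 1 * Real.exp (-(n : ℝ) / x)) :=
            mul_le_mul_of_nonneg_left h1 (hpos n hnT)
        _ = Real.exp 1 * g n := by rw [hgdef]; ring
    -- step 2: finite sum ≤ tail tsum
    have hgsum' : Summable (fun n : ℕ => g (T + 1 + n)) := by
      have := (summable_nat_add_iff (f := fun n => g (n + 1)) T).2 hgsum
      apply this.congr
      intro n
      congr 1
      omega
    have step2 : ∑ n ∈ Finset.Icc (T + 1) ⌊x⌋₊, g n ≤ ∑' n : ℕ, g (T + 1 + n) := by
      rw [← Finset.Ico_add_one_right_eq_Icc, Finset.sum_Ico_eq_sum_range]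
      apply Summable.sum_le_tsum _ (fun i _ => hgnn _ (by omega)) hgsum'
    -- step 3: tail tsum = full - head
    have step3 : ∑' n : ℕ, g (T + 1 + n) =
        (∑' n : ℕ, g (n + 1)) - ∑ j ∈ Finset.range T, g (j + 1) := by
      have h := Summable.sum_add_tsum_nat_add (f := fun n => g (n + 1)) T hgsum
      have h2 : ∑' n : ℕ, g (n + T + 1) = ∑' n : ℕ, g (T + 1 + n) := by
        apply tsum_congr
        intro n
        congr 1
        omega
      rw [← h2]
      have h3 : (fun n : ℕ => g (n + T + 1)) = fun n : ℕ => g (n + T + 1) := rfl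
      linarith [h]
    -- step 4
    have step4a : ∑' n : ℕ, g (n + 1) ≤ Cε * x ^ (r + ε) := by
      have heq : ∑' n : ℕ, g (n + 1) =
          ∑' n : ℕ, a (n + 1) * Real.exp (-((n : ℝ) + 1) / x) := by
        apply tsum_congr
        intro n
        simp only [hgdef]
        push_cast
        ring_nf
      rw [heq]
      exact le_trans (le_abs_self _) (hCε x hx)
    have step4b : -∑ j ∈ Finset.range T, g (j + 1) ≤ BT := by
      have h1 : |∑ j ∈ Finset.range T, g (j + 1)| ≤ ∑ j ∈ Finset.range T, |g (j + 1)| :=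
        Finset.abs_sum_le_sum_abs _ _
      have h2 : ∑ j ∈ Finset.range T, |g (j + 1)| ≤ BT := by
        rw [hBTdef, ← Finset.Ico_add_one_right_eq_Icc, Finset.sum_Ico_eq_sum_range]
        norm_num
        apply Finset.sum_le_sum
        intro j _
        rw [hgdef]
        simp only
        rw [abs_mul, abs_of_pos (Real.exp_pos _), show 1 + j = j + 1 by omega]
        calc |a (j + 1)| * Real.exp (-((j + 1 : ℕ) : ℝ) / x) ≤ |a (j + 1)| * 1 := by
              apply mul_le_mul_of_nonneg_left _ (abs_nonneg _)
              apply Real.exp_le_one_iff.2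
              apply div_nonpos_of_nonpos_of_nonneg _ hx0.le
              push_cast
              simp only [neg_nonpos]
              positivity
          _ = |a (j + 1)| := mul_one _
      calc -∑ j ∈ Finset.range T, g (j + 1) ≤ |∑ j ∈ Finset.range T, g (j + 1)| :=
            neg_le_abs _
        _ ≤ BT := le_trans h1 h2
    have hfinal : ∑ n ∈ Finset.Icc (T + 1) ⌊x⌋₊, g n ≤ Cε * x ^ (r + ε) + BT := by
      calc ∑ n ∈ Finset.Icc (T + 1) ⌊x⌋₊, g n ≤ ∑' n : ℕ, g (T + 1 + n) := step2
        _ = (∑' n : ℕ, g (n + 1)) - ∑ j ∈ Finset.range T, g (j + 1) := step3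
        _ ≤ Cε * x ^ (r + ε) + BT := by linarith [step4a, step4b]
    calc ∑ n ∈ Finset.Icc (T + 1) ⌊x⌋₊, a n
        ≤ Real.exp 1 * ∑ n ∈ Finset.Icc (T + 1) ⌊x⌋₊, g n := step1
      _ ≤ Real.exp 1 * (Cε * x ^ (r + ε) + BT) :=
          mul_le_mul_of_nonneg_left hfinal (Real.exp_pos 1).le
      _ = K₁ * x ^ (r + ε) + K₂ := by rw [hK₁def, hK₂def]; ring
  -- dyadic bound on S₂(x) = ∑ n ∈ Icc (T+1) ⌊x⌋₊, (n:ℝ)^α * a n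
  set c₀ : ℝ := (2:ℝ) ^ (max α 0) with hc₀def
  have hc₀1 : (1:ℝ) ≤ c₀ := Real.one_le_rpow (by norm_num) (le_max_right _ _)
  have hc₀0 : (0:ℝ) < c₀ := lt_of_lt_of_le one_pos hc₀1
  have h2α : (0:ℝ) < (2:ℝ) ^ α := Real.rpow_pos_of_pos (by norm_num) _
  have h2e : (0:ℝ) < (2:ℝ) ^ e := Real.rpow_pos_of_pos (by norm_num) _
  have h2e1 : (1:ℝ) < (2:ℝ) ^ e :=
    (Real.one_lt_rpow_iff_of_pos (by norm_num)).2 (Or.inl ⟨by norm_num, he_pos⟩)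
  set d : ℝ := 1 - 1 / (2:ℝ) ^ e with hddef
  have hd0 : 0 < d := by
    rw [hddef]
    have h1 : 1 / (2:ℝ) ^ e < 1 := by rw [div_lt_one h2e]; exact h2e1
    linarith
  set A : ℝ := (c₀ / (2:ℝ) ^ α) * (K₁ + K₂) / d with hAdef
  have hA0 : 0 ≤ A := by
    apply div_nonneg _ hd0.le
    exact mul_nonneg (div_nonneg hc₀0.le h2α.le) (by linarith)
  set B : ℝ := C + C * (2:ℝ) ^ (2*α) with hBdef
  have hB0 : 0 ≤ B := by
    have := Real.rpow_nonneg (by norm_num : (0:ℝ) ≤ 2) (2*α)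
    nlinarith
  have hIoc : ∀ m : ℕ, Finset.Icc (T+1) m = Finset.Ioc T m := fun m => Finset.Icc_add_one_left_eq_Ioc T m
  have hbase : ∀ x : ℝ, 1 ≤ x → x ≤ 2 →
      ∑ n ∈ Finset.Icc (T+1) ⌊x⌋₊, (n:ℝ)^α * a n ≤ B := by
    intro x hx hx2
    have hfl : ⌊x⌋₊ ≤ 2 := by
      have := Nat.floor_le_floor (R := ℝ) hx2
      simpa using this
    calc ∑ n ∈ Finset.Icc (T+1) ⌊x⌋₊, (n:ℝ)^α * a n
        ≤ ∑ n ∈ Finset.Icc (T+1) ⌊x⌋₊, C * (n:ℝ)^(2*α) := by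
          apply Finset.sum_le_sum
          intro n hn
          rw [Finset.mem_Icc] at hn
          have hn1 : (0:ℝ) < (n:ℝ) := by
            have : 1 ≤ n := by omega
            exact_mod_cast this
          have hnp : (0:ℝ) < (n:ℝ)^α := Real.rpow_pos_of_pos hn1 _
          have han : a n ≤ C * (n:ℝ)^α := le_trans (le_abs_self _) (hC n (by omega))
          calc (n:ℝ)^α * a n ≤ (n:ℝ)^α * (C * (n:ℝ)^α) :=
                mul_le_mul_of_nonneg_left han hnp.le
            _ = C * ((n:ℝ)^α * (n:ℝ)^α) := by ring
            _ = C * (n:ℝ)^(2*α) := by rw [← Real.rpow_add hn1, two_mul]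
      _ ≤ ∑ n ∈ (Finset.Icc 1 2 : Finset ℕ), C * (n:ℝ)^(2*α) := by
          apply Finset.sum_le_sum_of_subset_of_nonneg
          · intro n hn
            rw [Finset.mem_Icc] at hn ⊢
            omega
          · intro n hn _
            rw [Finset.mem_Icc] at hn
            have hn1 : (0:ℝ) < (n:ℝ) := by
              have : 1 ≤ n := hn.1
              exact_mod_cast this
            exact mul_nonneg hC0 (Real.rpow_nonneg hn1.le _)
      _ = C * ((1:ℝ))^(2*α) + C * ((2:ℕ):ℝ)^(2*α) := by
          rw [show (Finset.Icc 1 2 : Finset ℕ) = {1, 2} from rfl]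
          rw [Finset.sum_insert (by norm_num), Finset.sum_singleton]
          norm_num
      _ ≤ B := by
          rw [Real.one_rpow, hBdef]
          push_cast
          norm_num
  have hdy : ∀ J : ℕ, ∀ x : ℝ, 1 ≤ x → x ≤ 2 ^ J →
      ∑ n ∈ Finset.Icc (T+1) ⌊x⌋₊, (n:ℝ)^α * a n ≤ A * x ^ e + B := by
    intro J
    induction J with
    | zero =>
      intro x hx hx1
      have hAx : 0 ≤ A * x ^ e := mul_nonneg hA0 (Real.rpow_nonneg (by linarith) _)
      have hb := hbase x hx (by norm_num at hx1; linarith)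
      linarith
    | succ J ih =>
      intro x hx hxJ
      by_cases hcase : x ≤ 2 ^ J
      · exact ih x hx hcase
      push_neg at hcase
      have hAx : 0 ≤ A * x ^ e := mul_nonneg hA0 (Real.rpow_nonneg (by linarith) _)
      by_cases hx2 : x ≤ 2
      · have hb := hbase x hx hx2
        linarith
      push_neg at hx2
      have hx0 : (0:ℝ) < x := by linarith
      have hxh : (0:ℝ) < x / 2 := by linarith
      have hhalf1 : (1:ℝ) ≤ x / 2 := by linarith
      have hhalfJ : x / 2 ≤ 2 ^ J := by
        rw [div_le_iff₀ (by norm_num : (0:ℝ) < 2)]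
        calc x ≤ 2 ^ (J+1) := hxJ
          _ = 2 ^ J * 2 := by ring
      have IH := ih (x/2) hhalf1 hhalfJ
      have hMN : ⌊x/2⌋₊ ≤ ⌊x⌋₊ := Nat.floor_le_floor (by linarith)
      by_cases hTN : ⌊x⌋₊ < T + 1
      · rw [Finset.Icc_eq_empty (by omega), Finset.sum_empty]
        linarith
      push_neg at hTN
      set M' : ℕ := max T ⌊x/2⌋₊ with hM'def
      have hM'N : M' ≤ ⌊x⌋₊ := max_le (by omega) hMN
      have hsplit : ∑ n ∈ Finset.Icc (T+1) ⌊x⌋₊, (n:ℝ)^α * a n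
          = (∑ n ∈ Finset.Ioc T M', (n:ℝ)^α * a n)
            + ∑ n ∈ Finset.Ioc M' ⌊x⌋₊, (n:ℝ)^α * a n := by
        rw [hIoc]
        exact (Finset.sum_Ioc_consecutive _ (le_max_left T ⌊x/2⌋₊) hM'N).symm
      have hpart1 : ∑ n ∈ Finset.Ioc T M', (n:ℝ)^α * a n ≤ A * (x/2) ^ e + B := by
        refine le_trans ?_ IH
        rw [hIoc]
        apply Finset.sum_le_sum_of_subset_of_nonneg
        · intro n hn
          rw [Finset.mem_Ioc] at hn ⊢
          refine ⟨hn.1, ?_⟩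
          rcases le_total T ⌊x/2⌋₊ with h | h
          · rw [hM'def, max_eq_right h] at hn; exact hn.2
          · rw [hM'def, max_eq_left h] at hn; omega
        · intro n hn _
          rw [Finset.mem_Ioc] at hn
          exact mul_nonneg (Real.rpow_nonneg (Nat.cast_nonneg n) _) (hpos n hn.1)
      have hfacnn : (0:ℝ) ≤ c₀ * (x/2)^α :=
        mul_nonneg hc₀0.le (Real.rpow_nonneg hxh.le _)
      have hpart2 : ∑ n ∈ Finset.Ioc M' ⌊x⌋₊, (n:ℝ)^α * a n
          ≤ (c₀ * (x/2) ^ α) * (K₁ * x ^ (r+ε) + K₂) := by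
        have hfac : ∀ n ∈ Finset.Ioc M' ⌊x⌋₊, (n:ℝ)^α * a n ≤ (c₀ * (x/2)^α) * a n := by
          intro n hn
          rw [Finset.mem_Ioc] at hn
          have hnT : T < n := lt_of_le_of_lt (le_max_left T ⌊x/2⌋₊) hn.1
          have hMn : ⌊x/2⌋₊ < n := lt_of_le_of_lt (le_max_right T ⌊x/2⌋₊) hn.1
          have hn_lb : x / 2 < (n:ℝ) := (Nat.floor_lt hxh.le).1 hMn
          have hn_ub : (n:ℝ) ≤ x := le_trans (Nat.cast_le.2 hn.2) (Nat.floor_le hx0.le)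
          have hna : (n:ℝ)^α ≤ c₀ * (x/2)^α := by
            rcases le_or_gt 0 α with hα | hα
            · rw [hc₀def, max_eq_left hα, ← Real.mul_rpow (by norm_num) hxh.le]
              rw [show (2:ℝ) * (x/2) = x by ring]
              exact Real.rpow_le_rpow (Nat.cast_nonneg n) hn_ub hα
            · calc (n:ℝ)^α ≤ (x/2)^α :=
                    Real.rpow_le_rpow_of_nonpos hxh hn_lb.le hα.le
                _ = 1 * (x/2)^α := (one_mul _).symm
                _ ≤ c₀ * (x/2)^α :=
                    mul_le_mul_of_nonneg_right hc₀1 (Real.rpow_nonneg hxh.le _)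
          exact mul_le_mul_of_nonneg_right hna (hpos n hnT)
        calc ∑ n ∈ Finset.Ioc M' ⌊x⌋₊, (n:ℝ)^α * a n
            ≤ ∑ n ∈ Finset.Ioc M' ⌊x⌋₊, (c₀*(x/2)^α) * a n := Finset.sum_le_sum hfac
          _ = (c₀*(x/2)^α) * ∑ n ∈ Finset.Ioc M' ⌊x⌋₊, a n := by rw [Finset.mul_sum]
          _ ≤ (c₀*(x/2)^α) * ∑ n ∈ Finset.Icc (T+1) ⌊x⌋₊, a n := by
              apply mul_le_mul_of_nonneg_left _ hfacnn
              rw [hIoc]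
              apply Finset.sum_le_sum_of_subset_of_nonneg
              · intro n hn
                rw [Finset.mem_Ioc] at hn ⊢
                exact ⟨lt_of_le_of_lt (le_max_left T ⌊x/2⌋₊) hn.1, hn.2⟩
              · intro n hn _
                rw [Finset.mem_Ioc] at hn
                exact hpos n hn.1
          _ ≤ (c₀*(x/2)^α) * (K₁ * x^(r+ε) + K₂) :=
              mul_le_mul_of_nonneg_left (hS x hx) hfacnn
      have hhalf_e : (x/2)^e = x^e / (2:ℝ)^e := Real.div_rpow hx0.le (by norm_num) e
      have hhalf_α : (x/2)^α = x^α / (2:ℝ)^α := Real.div_rpow hx0.le (by norm_num) α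
      have hxa_le : x ^ α ≤ x ^ e := Real.rpow_le_rpow_of_exponent_le hx he_α
      have hxarε : x ^ α * x ^ (r+ε) = x ^ (α + (r+ε)) := (Real.rpow_add hx0 _ _).symm
      have hxarε_le : x ^ (α + (r+ε)) ≤ x ^ e :=
        Real.rpow_le_rpow_of_exponent_le hx (by rw [← add_assoc]; exact he_αrε)
      have hAd : A * d = (c₀ / (2:ℝ)^α) * (K₁ + K₂) := by
        rw [hAdef]
        exact div_mul_cancel₀ _ hd0.ne'
      have h1 : (c₀*((x/2)^α))*(K₁ * x^(r+ε) + K₂) ≤ A * d * x^e := by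
        rw [hhalf_α, hAd]
        have hcc : (0:ℝ) ≤ c₀ / (2:ℝ)^α := div_nonneg hc₀0.le h2α.le
        calc c₀ * (x^α/(2:ℝ)^α) * (K₁ * x^(r+ε) + K₂)
            = (c₀/(2:ℝ)^α) * (K₁ * (x^α * x^(r+ε)) + K₂ * x^α) := by ring
          _ = (c₀/(2:ℝ)^α) * (K₁ * x^(α+(r+ε)) + K₂ * x^α) := by rw [hxarε]
          _ ≤ (c₀/(2:ℝ)^α) * (K₁ * x^e + K₂ * x^e) := by
              apply mul_le_mul_of_nonneg_left _ hcc
              have hh1 := mul_le_mul_of_nonneg_left hxarε_le hK₁0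
              have hh2 := mul_le_mul_of_nonneg_left hxa_le hK₂0
              linarith
          _ = (c₀/(2:ℝ)^α)*(K₁+K₂) * x^e := by ring
      have h2 : A * (x/2)^e = A * x^e - A * d * x^e := by
        rw [hhalf_e, hddef]
        field_simp
        ring
      rw [hsplit]
      linarith
  have hS₂ : ∀ x : ℝ, 1 ≤ x →
      ∑ n ∈ Finset.Icc (T+1) ⌊x⌋₊, (n:ℝ)^α * a n ≤ A * x ^ e + B := by
    intro x hx
    obtain ⟨J, hJ⟩ := pow_unbounded_of_one_lt x (by norm_num : (1:ℝ) < 2)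
    exact hdy J x hx hJ.le
  -- final contradiction
  set c : ℝ := (e + k) / 2 with hcdef
  have hc0 : 0 < c := by rw [hcdef]; linarith
  have hck : c < k := by rw [hcdef]; linarith
  have hec : e ≤ c := by rw [hcdef]; linarith
  have hα₁0 : 0 < C*A + C*B + 1 := by nlinarith [mul_nonneg hC0 hA0, mul_nonneg hC0 hB0]
  obtain ⟨x₀, hx₀1, hx₀low⟩ := hlow c hc0 hck (C*A + C*B + 1) hα₁0 1
  have hgoal1 : ∑ n ∈ Finset.Icc (T+1) ⌊x₀⌋₊, (a n)^2 ≤ C*A * x₀ ^ e + C*B := by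
    calc ∑ n ∈ Finset.Icc (T+1) ⌊x₀⌋₊, (a n)^2
        ≤ ∑ n ∈ Finset.Icc (T+1) ⌊x₀⌋₊, C * ((n:ℝ)^α * a n) := by
          apply Finset.sum_le_sum
          intro n hn
          rw [Finset.mem_Icc] at hn
          have hnT : T < n := hn.1
          have han : a n ≤ C * (n:ℝ)^α := le_trans (le_abs_self _) (hC n (by omega))
          have hann := hpos n hnT
          calc (a n)^2 = a n * a n := sq (a n)
            _ ≤ (C * (n:ℝ)^α) * a n := mul_le_mul_of_nonneg_right han hann
            _ = C * ((n:ℝ)^α * a n) := by ring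
      _ = C * ∑ n ∈ Finset.Icc (T+1) ⌊x₀⌋₊, (n:ℝ)^α * a n := (Finset.mul_sum _ _ _).symm
      _ ≤ C * (A * x₀^e + B) := mul_le_mul_of_nonneg_left (hS₂ x₀ hx₀1.le) hC0
      _ = C*A * x₀^e + C*B := by ring
  have hxc : 0 < x₀ ^ c := Real.rpow_pos_of_pos (by linarith) _
  have hce : x₀ ^ e ≤ x₀ ^ c := Real.rpow_le_rpow_of_exponent_le hx₀1.le hec
  have h1c : (1:ℝ) ≤ x₀ ^ c := Real.one_le_rpow hx₀1.le hc0.le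
  have hCA := mul_nonneg hC0 hA0
  have hCB := mul_nonneg hC0 hB0
  have hh3 := mul_le_mul_of_nonneg_left hce hCA
  have hh4 := mul_le_mul_of_nonneg_left h1c hCB
  have hexpand : (C*A + C*B + 1) * x₀^c = C*A*x₀^c + C*B*x₀^c + x₀^c := by ring
  rw [hexpand] at hx₀low
  linarith
end

section
/- Suppose (a_n)_{n≥1} are nonnegative real numbers with a_n = O(n^α), the summatory function satisfies ∑_{n≤x} a_n = O(x^{r+ε}) for every ε > 0, and the Dirichlet series ∑_{n≥1} a_n² n^{-s} has finite abscissa of convergence σ (it has a singularity at s = σ by Landau's theorem). Then σ ≤ α + r. -/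
open Finset

/-- MVT bound: for `t > 0` and `x ≥ 1`, `x^(-t) - (x+1)^(-t) ≤ t * x^(-t-1)`. -/
lemma stmt6_key {t x : ℝ} (ht : 0 < t) (hx : 1 ≤ x) :
    x ^ (-t) - (x + 1) ^ (-t) ≤ t * x ^ (-t - 1) := by
  have hx0 : 0 < x := lt_of_lt_of_le one_pos hx
  obtain ⟨c, hc, hceq⟩ := exists_hasDerivAt_eq_slope (fun y => y ^ (-t))
    (fun y => (-t) * y ^ (-t - 1)) (by linarith : x < x + 1)
    (fun y hy => (Real.continuousAt_rpow_const y (-t)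
      (Or.inl (ne_of_gt (lt_of_lt_of_le hx0 hy.1)))).continuousWithinAt)
    (fun y hy => Real.hasDerivAt_rpow_const
      (Or.inl (ne_of_gt (lt_trans hx0 hy.1))))
  have hcx : x ≤ c := le_of_lt hc.1
  have hc0 : 0 < c := lt_of_lt_of_le hx0 hcx
  have heq : x ^ (-t) - (x + 1) ^ (-t) = t * c ^ (-t - 1) := by
    have h1 : x + 1 - x = 1 := by ring
    rw [h1, div_one] at hceq
    nlinarith [hceq]
  rw [heq]
  have : c ^ (-t - 1) ≤ x ^ (-t - 1) :=
    Real.rpow_le_rpow_of_nonpos hx0 hcx (by linarith)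
  exact mul_le_mul_of_nonneg_left this ht.le

/-- If `a n ≥ 0`, `a n = O(n^α)`, the partial sums satisfy
`∑_{n ≤ x} a n = O(x^{r+ε})` for every `ε > 0`, and `σ` is the abscissa of convergence
of the Dirichlet series `∑ (a n)^2 n^{-s}`, then `σ ≤ α + r`. -/
theorem stmt6 (a : ℕ → ℝ) (α r σ : ℝ) (hr : 0 ≤ r)
    (hnn : ∀ n, 0 ≤ a n)
    (hO : ∃ C : ℝ, ∀ n : ℕ, 1 ≤ n → a n ≤ C * (n : ℝ) ^ α)
    (hpartial : ∀ ε : ℝ, 0 < ε → ∃ C : ℝ, ∀ x : ℝ, 1 ≤ x →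
      ∑ n ∈ Finset.Icc 1 ⌊x⌋₊, a n ≤ C * x ^ (r + ε))
    (hconv : ∀ s : ℝ, σ < s → Summable (fun n : ℕ => (a (n + 1)) ^ 2 / ((n : ℝ) + 1) ^ s))
    (hdiv : ∀ s : ℝ, s < σ → ¬ Summable (fun n : ℕ => (a (n + 1)) ^ 2 / ((n : ℝ) + 1) ^ s)) :
    σ ≤ α + r := by
  by_contra hcon
  push_neg at hcon
  set s : ℝ := (α + r + σ) / 2 with hs_def
  have hs1 : α + r < s := by simp only [hs_def]; linarith
  have hs2 : s < σ := by simp only [hs_def]; linarith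
  refine hdiv s hs2 ?_
  set ε : ℝ := (s - α - r) / 2 with hε_def
  have hε : 0 < ε := by simp only [hε_def]; linarith
  set t : ℝ := s - α with ht_def
  have ht : 0 < t := by simp only [ht_def]; linarith
  have htrε : t = r + 2 * ε := by simp only [ht_def, hε_def]; ring
  obtain ⟨C₀, hC₀⟩ := hO
  set C : ℝ := max C₀ 0 with hC_def
  have hC : 0 ≤ C := le_max_right _ _
  obtain ⟨D₀, hD₀⟩ := hpartial ε hε
  set D : ℝ := max D₀ 0 with hD_def
  have hD : 0 ≤ D := le_max_right _ _
  -- partial sum bound in discrete form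
  have hA : ∀ k : ℕ, ∑ i ∈ range k, a (i + 1) ≤ D * (k : ℝ) ^ (r + ε) := by
    intro k
    rcases Nat.eq_zero_or_pos k with hk | hk
    · subst hk
      simp [Real.zero_rpow (by positivity : r + ε ≠ 0)]
    · have h1 : (1 : ℝ) ≤ (k : ℝ) := by exact_mod_cast hk
      have h2 := hD₀ (k : ℝ) h1
      rw [Nat.floor_natCast] at h2
      have h3 : ∑ n ∈ Finset.Icc 1 k, a n = ∑ i ∈ range k, a (i + 1) := by
        rw [show Finset.Icc 1 k = Finset.Ico 1 (k + 1) by rw [Finset.Ico_add_one_right_eq_Icc],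
          Finset.sum_Ico_eq_sum_range]
        simp [add_comm]
      rw [h3] at h2
      calc ∑ i ∈ range k, a (i + 1) ≤ D₀ * (k : ℝ) ^ (r + ε) := h2
        _ ≤ D * (k : ℝ) ^ (r + ε) := by
            apply mul_le_mul_of_nonneg_right (le_max_left _ _) (by positivity)
  have hAnn : ∀ k : ℕ, 0 ≤ ∑ i ∈ range k, a (i + 1) :=
    fun k => Finset.sum_nonneg fun i _ => hnn _
  -- summability of the comparison series ∑ (m+1)^(-1-ε)
  have hsumε : Summable (fun m : ℕ => ((m : ℝ) + 1) ^ (-1 - ε)) := by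
    have h0 : Summable (fun m : ℕ => (m : ℝ) ^ (-1 - ε)) :=
      Real.summable_nat_rpow.mpr (by linarith)
    have := (summable_nat_add_iff 1).mpr h0
    refine this.congr fun m => ?_
    push_cast
    ring_nf
  set T : ℝ := ∑' m : ℕ, ((m : ℝ) + 1) ^ (-1 - ε) with hT_def
  have hTnn : 0 ≤ T := tsum_nonneg fun m => by positivity
  -- Step 1: Summable (fun n => a (n+1) * (n+1)^(-t))
  have hstep1 : Summable (fun n : ℕ => ((n : ℝ) + 1) ^ (-t) * a (n + 1)) := by
    apply summable_of_sum_range_le (c := D + t * (D * T))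
      (fun n => mul_nonneg (by positivity) (hnn _))
    intro N
    rcases Nat.eq_zero_or_pos N with hN | hN
    · subst hN
      simp only [Finset.range_zero, Finset.sum_empty]
      have h1 := mul_nonneg ht.le (mul_nonneg hD hTnn)
      linarith
    obtain ⟨m, rfl⟩ := Nat.exists_eq_succ_of_ne_zero (Nat.pos_iff_ne_zero.mp hN)
    -- N = m + 1
    have hby := Finset.sum_range_by_parts (fun i => ((i : ℝ) + 1) ^ (-t))
      (fun i => a (i + 1)) (m + 1)
    simp only [smul_eq_mul, Nat.add_sub_cancel] at hby
    simp only [Nat.succ_eq_add_one]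
    rw [hby]
    have hterm1 : ((m : ℝ) + 1) ^ (-t) * (∑ i ∈ range (m + 1), a (i + 1)) ≤ D := by
      calc ((m : ℝ) + 1) ^ (-t) * (∑ i ∈ range (m + 1), a (i + 1))
          ≤ ((m : ℝ) + 1) ^ (-t) * (D * ((m + 1 : ℕ) : ℝ) ^ (r + ε)) := by
            apply mul_le_mul_of_nonneg_left (hA (m + 1)) (by positivity)
        _ = D * ((m : ℝ) + 1) ^ (-t + (r + ε)) := by
            push_cast
            rw [Real.rpow_add (by positivity) (-t) (r + ε), mul_left_comm]
        _ ≤ D * 1 := by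
            have h0m : (0 : ℝ) ≤ (m : ℝ) := Nat.cast_nonneg m
            exact mul_le_mul_of_nonneg_left
              (Real.rpow_le_one_of_one_le_of_nonpos (by linarith) (by linarith [htrε])) hD
        _ = D := mul_one D
    have hterm2 : -(∑ i ∈ range m, ((((i + 1 : ℕ) : ℝ) + 1) ^ (-t) - ((i : ℝ) + 1) ^ (-t)) *
        (∑ j ∈ range (i + 1), a (j + 1))) ≤ t * (D * T) := by
      rw [← Finset.sum_neg_distrib]
      have heach : ∀ i ∈ range m,
          -(((((i + 1 : ℕ) : ℝ) + 1) ^ (-t) - ((i : ℝ) + 1) ^ (-t)) *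
            (∑ j ∈ range (i + 1), a (j + 1)))
          ≤ t * D * ((i : ℝ) + 1) ^ (-1 - ε) := by
        intro i _
        rw [neg_mul_eq_neg_mul, neg_sub]
        have h0i : (0 : ℝ) ≤ (i : ℝ) := Nat.cast_nonneg i
        have hx1 : (1 : ℝ) ≤ (i : ℝ) + 1 := by linarith
        have hkey : ((i : ℝ) + 1) ^ (-t) - (((i + 1 : ℕ) : ℝ) + 1) ^ (-t)
            ≤ t * ((i : ℝ) + 1) ^ (-t - 1) := by
          push_cast
          have := stmt6_key ht hx1
          convert this using 3 <;> push_cast <;> ring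
        have hkey0 : 0 ≤ ((i : ℝ) + 1) ^ (-t) - (((i + 1 : ℕ) : ℝ) + 1) ^ (-t) := by
          have : (((i + 1 : ℕ) : ℝ) + 1) ^ (-t) ≤ ((i : ℝ) + 1) ^ (-t) := by
            apply Real.rpow_le_rpow_of_nonpos (by positivity) (by push_cast; linarith)
              (by linarith)
          linarith
        calc (((i : ℝ) + 1) ^ (-t) - (((i + 1 : ℕ) : ℝ) + 1) ^ (-t)) *
              (∑ j ∈ range (i + 1), a (j + 1))
            ≤ (t * ((i : ℝ) + 1) ^ (-t - 1)) * (D * ((i + 1 : ℕ) : ℝ) ^ (r + ε)) :=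
              mul_le_mul hkey (hA (i + 1)) (hAnn _) (by positivity)
          _ = t * D * ((i : ℝ) + 1) ^ (-1 - ε) := by
              push_cast
              rw [show (-1 - ε : ℝ) = (-t - 1) + (r + ε) by rw [htrε]; ring,
                Real.rpow_add (by positivity : (0:ℝ) < (i : ℝ) + 1) (-t - 1) (r + ε),
                mul_mul_mul_comm]
      calc ∑ i ∈ range m, -(((((i + 1 : ℕ) : ℝ) + 1) ^ (-t) - ((i : ℝ) + 1) ^ (-t)) *
              (∑ j ∈ range (i + 1), a (j + 1)))
          ≤ ∑ i ∈ range m, t * D * ((i : ℝ) + 1) ^ (-1 - ε) := Finset.sum_le_sum heach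
        _ = t * D * ∑ i ∈ range m, ((i : ℝ) + 1) ^ (-1 - ε) := by
            rw [Finset.mul_sum]
        _ ≤ t * D * T := by
            apply mul_le_mul_of_nonneg_left _ (by positivity)
            exact Summable.sum_le_tsum (range m) (fun i _ => by positivity) hsumε
        _ = t * (D * T) := by ring
    linarith
  -- Step 2: compare
  have hstep2 : Summable (fun n : ℕ => C * (((n : ℝ) + 1) ^ (-t) * a (n + 1))) :=
    hstep1.mul_left C
  apply Summable.of_nonneg_of_le (fun n => by positivity) _ hstep2
  intro n
  have hpos : (0 : ℝ) < ((n : ℝ) + 1) ^ s := by positivity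
  rw [div_le_iff₀ hpos]
  have h1 : a (n + 1) ≤ C * ((n : ℝ) + 1) ^ α := by
    have := hC₀ (n + 1) (by omega)
    push_cast at this
    calc a (n + 1) ≤ C₀ * ((n : ℝ) + 1) ^ α := this
      _ ≤ C * ((n : ℝ) + 1) ^ α :=
        mul_le_mul_of_nonneg_right (le_max_left _ _) (by positivity)
  calc (a (n + 1)) ^ 2 = a (n + 1) * a (n + 1) := sq (a (n + 1))
    _ ≤ (C * ((n : ℝ) + 1) ^ α) * a (n + 1) :=
        mul_le_mul_of_nonneg_right h1 (hnn _)
    _ = C * (((n : ℝ) + 1) ^ (-t) * a (n + 1)) * ((n : ℝ) + 1) ^ s := by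
        rw [show (α : ℝ) = -t + s by rw [ht_def]; ring,
          Real.rpow_add (by positivity : (0:ℝ) < (n : ℝ) + 1)]
        ring
end

section
/- Let (a_n)_{n≥1} be real numbers with a_n = O(n^α) for some real α. Suppose the Dirichlet series ∑_{n≥1} a_n n^{-s} extends analytically to Re(s) > r ≥ 0 with polynomial growth in Im(s) there, and suppose the Dirichlet series ∑_{n≥1} a_n² n^{-s} has a singularity at s = k > 0 with α + r < k. Then the sequence (a_n) changes sign infinitely often: there are infinitely many n with a_n > 0 and infinitely many n with a_n < 0. -/
open LSeries Complex Nat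

section part1
private lemma logMul_iterate_ofReal (f : ℕ → ℝ) (m n : ℕ) :
    LSeries.logMul^[m] (fun j => (f j : ℂ)) n = ((Real.log n ^ m * f n : ℝ) : ℂ) := by
  induction m with
  | zero => simp
  | succ m ih =>
    rw [Function.iterate_succ_apply']
    show Complex.log n * (LSeries.logMul^[m] (fun j => (f j : ℂ)) n) = _
    rw [ih, ← Complex.natCast_log]
    push_cast
    ring

private noncomputable def rT (f : ℕ → ℝ) (c : ℝ) (n : ℕ) : ℝ :=
  if n = 0 then 0 else f n * (n : ℝ) ^ (-c)

private lemma rT_nonneg {f : ℕ → ℝ} (hf : ∀ n, 0 ≤ f n) (c : ℝ) (n : ℕ) : 0 ≤ rT f c n := by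
  unfold rT
  split
  · exact le_refl 0
  · have := hf n
    positivity

private lemma term_ofReal (f : ℕ → ℝ) (c : ℝ) (n : ℕ) :
    LSeries.term (fun j => (f j : ℂ)) (c : ℂ) n = ((rT f c n : ℝ) : ℂ) := by
  rcases eq_or_ne n 0 with rfl | hn
  · simp [rT]
  · rw [LSeries.term_of_ne_zero hn, rT, if_neg hn, Real.rpow_neg (Nat.cast_nonneg n),
      ← div_eq_mul_inv, Complex.ofReal_div, Complex.ofReal_cpow (Nat.cast_nonneg n)]
    norm_num
end part1

/-- Landau's theorem: a Dirichlet series with nonnegative coefficients whose sum extends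
analytically to the half-plane `Re s > x` has abscissa of absolute convergence at most `x`. -/
private lemma landau (f : ℕ → ℝ) (hf : ∀ n, 0 ≤ f n) (x y : ℝ)
    (hy : LSeries.abscissaOfAbsConv (fun n => (f n : ℂ)) ≤ y)
    (g : ℂ → ℂ) (hg : DifferentiableOn ℂ g {s : ℂ | x < s.re})
    (heq : ∀ s : ℂ, y < s.re → g s = LSeries (fun n => (f n : ℂ)) s) :
    LSeries.abscissaOfAbsConv (fun n => (f n : ℂ)) ≤ x := by
  by_contra hcon
  push_neg at hcon
  set F : ℕ → ℂ := fun n => (f n : ℂ) with hFdef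
  obtain ⟨z, hxz, hzA⟩ := EReal.exists_between_coe_real hcon
  have hxz' : x < z := by exact_mod_cast hxz
  set c : ℝ := y + 1 with hc
  have hzy : z < y := by exact_mod_cast hzA.trans_le hy
  have hzc : z < c := by simp only [hc]; linarith
  have hyc : (y : EReal) < ((c : ℂ).re : EReal) := by
    rw [Complex.ofReal_re]
    exact_mod_cast (by linarith : y < c)
  have habs : LSeries.abscissaOfAbsConv F < (c : ℂ).re := lt_of_le_of_lt hy hyc
  have hacr : ∀ m : ℕ, LSeries.abscissaOfAbsConv (LSeries.logMul^[m] F) < (c : ℂ).re := by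
    intro m
    rwa [LSeries.absicssaOfAbsConv_logPowMul]
  -- the real coefficients of the iterated log series
  set T : ℕ → ℕ → ℝ := fun m n => Real.log n ^ m * rT f c n with hTdef
  have hterm : ∀ m n, LSeries.term (LSeries.logMul^[m] F) (c : ℂ) n = ((T m n : ℝ) : ℂ) := by
    intro m n
    have h1 : LSeries.logMul^[m] F = fun j : ℕ => ((Real.log j ^ m * f j : ℝ) : ℂ) :=
      funext fun j : ℕ => logMul_iterate_ofReal f m j
    rw [h1, term_ofReal]
    rcases eq_or_ne n 0 with rfl | hn
    · simp [rT, hTdef]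
    · simp only [rT, if_neg hn, hTdef]
      push_cast
      ring
  have hTnonneg : ∀ m n, 0 ≤ T m n := by
    intro m n
    exact mul_nonneg (pow_nonneg (Real.log_natCast_nonneg n) m) (rT_nonneg hf c n)
  have hTsum : ∀ m, Summable (T m) := by
    intro m
    have h2 : Summable fun n => LSeries.term (LSeries.logMul^[m] F) (c : ℂ) n :=
      LSeriesSummable_of_abscissaOfAbsConv_lt_re (hacr m)
    exact Complex.summable_ofReal.mp (h2.congr (hterm m))
  have hLS : ∀ m, LSeries (LSeries.logMul^[m] F) (c : ℂ) = ((∑' n, T m n : ℝ) : ℂ) := by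
    intro m
    rw [LSeries, tsum_congr (hterm m), Complex.ofReal_tsum]
  -- Taylor expansion of g around c on the ball of radius c - x
  have hball : Metric.ball ((c : ℝ) : ℂ) (c - x) ⊆ {s : ℂ | x < s.re} := by
    intro s hs
    simp only [Metric.mem_ball, Complex.dist_eq] at hs
    have h3 : |s.re - c| ≤ ‖s - ((c : ℝ) : ℂ)‖ := by
      simpa using Complex.abs_re_le_norm (s - ((c : ℝ) : ℂ))
    have h4 := (abs_lt.mp (lt_of_le_of_lt h3 hs)).1
    simp only [Set.mem_setOf_eq]
    linarith
  have hzball : ((z : ℝ) : ℂ) ∈ Metric.ball ((c : ℝ) : ℂ) (c - x) := by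
    simp only [Metric.mem_ball, Complex.dist_eq, ← Complex.ofReal_sub, Complex.norm_real, Real.norm_eq_abs]
    rw [abs_of_neg (by linarith)]
    linarith
  have hopen : IsOpen {s : ℂ | y < s.re} := isOpen_lt continuous_const Complex.continuous_re
  have heqon : Set.EqOn g (LSeries F) {s : ℂ | y < s.re} := fun s hs => heq s hs
  have hcmem : ((c : ℝ) : ℂ) ∈ {s : ℂ | y < s.re} := by
    simp only [Set.mem_setOf_eq, Complex.ofReal_re, hc]
    linarith
  have hid : ∀ m, iteratedDeriv m g ((c : ℝ) : ℂ) = (-1) ^ m * ((∑' n, T m n : ℝ) : ℂ) := by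
    intro m
    rw [heqon.iteratedDeriv_of_isOpen hopen m hcmem, LSeries_iteratedDeriv m habs, hLS m]
  set w : ℕ → ℝ := fun m => (m ! : ℝ)⁻¹ * (c - z) ^ m * (∑' n, T m n) with hwdef
  have hTay := Complex.hasSum_taylorSeries_on_ball (hg.mono hball) hzball
  have hwHasSum : HasSum (fun m => ((w m : ℝ) : ℂ)) (g ((z : ℝ) : ℂ)) := by
    have hfun : (fun m : ℕ => (m ! : ℂ)⁻¹ • (((z : ℝ) : ℂ) - ((c : ℝ) : ℂ)) ^ m •
        iteratedDeriv m g ((c : ℝ) : ℂ)) = fun m => ((w m : ℝ) : ℂ) := by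
      funext m
      have key : ∀ S : ℂ, (m ! : ℂ)⁻¹ * ((((z : ℝ) : ℂ) - ((c : ℝ) : ℂ)) ^ m * ((-1) ^ m * S))
          = (m ! : ℂ)⁻¹ * (((c : ℝ) : ℂ) - ((z : ℝ) : ℂ)) ^ m * S := by
        intro S
        rw [show (((z : ℝ) : ℂ) - ((c : ℝ) : ℂ)) ^ m * ((-1) ^ m * S)
            = ((-1) ^ m * (((z : ℝ) : ℂ) - ((c : ℝ) : ℂ)) ^ m) * S by ring,
          ← neg_pow, neg_sub]
        ring
      rw [hid m, smul_eq_mul, smul_eq_mul, key, hwdef]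
      push_cast
      ring
    rwa [hfun] at hTay
  have hcz : (0:ℝ) ≤ c - z := by linarith
  have hwSummable : Summable w := Complex.summable_ofReal.mp hwHasSum.summable
  have hwnonneg : ∀ m, 0 ≤ w m := by
    intro m
    have hS : 0 ≤ ∑' n, T m n := tsum_nonneg (hTnonneg m)
    simp only [hwdef]
    have h0 : (0:ℝ) ≤ (m ! : ℝ)⁻¹ := by positivity
    exact mul_nonneg (mul_nonneg h0 (pow_nonneg hcz m)) hS
  have hrow : ∀ m : ℕ, (∑' n : ℕ, ENNReal.ofReal ((m ! : ℝ)⁻¹ * (c - z) ^ m * T m n))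
      = ENNReal.ofReal (w m) := by
    intro m
    rw [← ENNReal.ofReal_tsum_of_nonneg
      (fun n => mul_nonneg (mul_nonneg (by positivity) (pow_nonneg hcz m)) (hTnonneg m n))
      ((hTsum m).mul_left _), tsum_mul_left]
  have htot : (∑' (m : ℕ) (n : ℕ), ENNReal.ofReal ((m ! : ℝ)⁻¹ * (c - z) ^ m * T m n)) ≠ ⊤ := by
    rw [tsum_congr hrow, ← ENNReal.ofReal_tsum_of_nonneg hwnonneg hwSummable]
    exact ENNReal.ofReal_ne_top
  have hcol : ∀ n : ℕ, (∑' m : ℕ, ENNReal.ofReal ((m ! : ℝ)⁻¹ * (c - z) ^ m * T m n))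
      = ENNReal.ofReal (rT f z n) := by
    intro n
    rcases eq_or_ne n 0 with rfl | hn
    · simp [hTdef, rT]
    · have hn1 : (1:ℝ) ≤ (n:ℝ) := by exact_mod_cast Nat.one_le_iff_ne_zero.mpr hn
      have hnpos : (0:ℝ) < (n:ℝ) := by linarith
      have hlog : 0 ≤ Real.log n := Real.log_nonneg hn1
      have hfun2 : ∀ m : ℕ, (m ! : ℝ)⁻¹ * (c - z) ^ m * T m n
          = ((c - z) * Real.log n) ^ m / (m !) * (f n * (n:ℝ) ^ (-c)) := by
        intro m
        simp only [hTdef, rT, if_neg hn, mul_pow]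
        rw [div_eq_mul_inv]
        ring
      have hsumm : Summable (fun m : ℕ => ((c - z) * Real.log n) ^ m / (m !)
          * (f n * (n:ℝ) ^ (-c))) := (Real.summable_pow_div_factorial _).mul_right _
      have hnonneg2 : ∀ m : ℕ,
          0 ≤ ((c - z) * Real.log n) ^ m / (m !) * (f n * (n:ℝ) ^ (-c)) := by
        intro m
        have hfn := hf n
        have h0 : (0:ℝ) ≤ (c - z) * Real.log n := mul_nonneg hcz hlog
        positivity
      rw [tsum_congr (fun m => congrArg ENNReal.ofReal (hfun2 m)),
        ← ENNReal.ofReal_tsum_of_nonneg hnonneg2 hsumm, tsum_mul_right]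
      congr 1
      rw [show (∑' m : ℕ, ((c - z) * Real.log n) ^ m / (m ! : ℝ))
          = Real.exp ((c - z) * Real.log n) by
        rw [Real.exp_eq_exp_ℝ, NormedSpace.exp_eq_tsum_div],
        show Real.exp ((c - z) * Real.log n) = (n:ℝ) ^ (c - z) by
          rw [Real.rpow_def_of_pos hnpos, mul_comm], rT, if_neg hn]
      have hpow : (n:ℝ) ^ (c - z) * ((n:ℝ) ^ (-c)) = (n:ℝ) ^ (-z) := by
        rw [← Real.rpow_add hnpos]
        congr 1
        ring
      calc (n:ℝ) ^ (c - z) * (f n * (n:ℝ) ^ (-c))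
          = f n * ((n:ℝ) ^ (c - z) * ((n:ℝ) ^ (-c))) := by ring
        _ = f n * (n:ℝ) ^ (-z) := by rw [hpow]
  have hne : (∑' n : ℕ, ENNReal.ofReal (rT f z n)) ≠ ⊤ := by
    rw [← tsum_congr hcol, ENNReal.tsum_comm]
    exact htot
  have hsum_rT : Summable (rT f z) := by
    have h6 := ENNReal.summable_toReal hne
    exact h6.congr fun n => ENNReal.toReal_ofReal (rT_nonneg hf z n)
  have hLSz : LSeriesSummable F ((z : ℝ) : ℂ) :=
    Summable.congr (Complex.summable_ofReal.mpr hsum_rT) fun n => (term_ofReal f z n).symm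
  have hfin : LSeries.abscissaOfAbsConv F ≤ ((z : ℝ) : EReal) := by
    have h7 := hLSz.abscissaOfAbsConv_le
    rwa [Complex.ofReal_re] at h7
  exact (hzA.trans_le hfin).false

private lemma LSeries_eq_tsum_shift (b : ℕ → ℂ) (s : ℂ) (hs : LSeriesSummable b s) :
    LSeries b s = ∑' n : ℕ, b (n + 1) * ((n : ℂ) + 1) ^ (-s) := by
  rw [LSeries, Summable.tsum_eq_zero_add hs, LSeries.term_zero, zero_add]
  refine tsum_congr fun n => ?_
  rw [LSeries.term_of_ne_zero (Nat.succ_ne_zero n), Complex.cpow_neg, div_eq_mul_inv]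
  norm_num

private lemma key (a : ℕ → ℝ) (α r k : ℝ) (hr : 0 ≤ r) (hk : 0 < k) (hark : α + r < k)
    (hO : ∃ C : ℝ, ∀ n : ℕ, 1 ≤ n → |a n| ≤ C * (n : ℝ) ^ α)
    (M : ℂ → ℂ) (hMd : DifferentiableOn ℂ M {s : ℂ | r < s.re})
    (hMeq : ∀ s : ℂ, α + 1 < s.re → M s = ∑' n : ℕ, (a (n + 1) : ℂ) * ((n : ℂ) + 1) ^ (-s))
    (hsing : ¬ ∃ (F : ℂ → ℂ) (U : Set ℂ), IsOpen U ∧ (k : ℂ) ∈ U ∧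
      DifferentiableOn ℂ F (U ∪ {s : ℂ | 2 * α + 1 < s.re}) ∧
      (∀ s : ℂ, 2 * α + 1 < s.re →
        F s = ∑' n : ℕ, ((a (n + 1)) ^ 2 : ℂ) * ((n : ℂ) + 1) ^ (-s))) :
    {n : ℕ | a n < 0}.Infinite := by
  obtain ⟨C, hC⟩ := hO
  by_contra hfin
  rw [Set.not_infinite] at hfin
  obtain ⟨N, hN⟩ : ∃ N : ℕ, ∀ n, N ≤ n → 0 ≤ a n := by
    obtain ⟨N, hNub⟩ := hfin.bddAbove
    refine ⟨N + 1, fun n hn => ?_⟩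
    by_contra h
    push_neg at h
    have hmem : n ∈ {n : ℕ | a n < 0} := h
    have := hNub hmem
    omega
  set f : ℕ → ℝ := fun n => if n < N then 0 else a n with hfdef
  have hf0 : ∀ n, 0 ≤ f n := by
    intro n
    simp only [hfdef]
    split
    · exact le_rfl
    · rename_i h
      exact hN n (by omega)
  -- abscissa bounds for the original and truncated series
  have haabs : LSeries.abscissaOfAbsConv (fun n => (a n : ℂ)) ≤ ((α + 1 : ℝ) : EReal) := by
    have h1 := LSeries.abscissaOfAbsConv_le_of_le_const_mul_rpow (f := fun n => (a n : ℂ))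
      ⟨C, fun n hn => by
        rw [Complex.norm_real, Real.norm_eq_abs]
        exact hC n (Nat.one_le_iff_ne_zero.mpr hn)⟩
    refine le_trans h1 (le_of_eq ?_)
    norm_cast
  have hfabs : LSeries.abscissaOfAbsConv (fun n => (f n : ℂ)) ≤ ((α + 1 : ℝ) : EReal) := by
    have h1 := LSeries.abscissaOfAbsConv_le_of_le_const_mul_rpow (f := fun n => (f n : ℂ))
      ⟨C, fun n hn => by
        rw [Complex.norm_real, Real.norm_eq_abs]
        refine le_trans ?_ (hC n (Nat.one_le_iff_ne_zero.mpr hn))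
        simp only [hfdef]
        split
        · simp
        · exact le_rfl⟩
    refine le_trans h1 (le_of_eq ?_)
    norm_cast
  set y : ℝ := max r (α + 1) with hydef
  have hfabs_y : LSeries.abscissaOfAbsConv (fun n => (f n : ℂ)) ≤ (y : EReal) :=
    le_trans hfabs (by exact_mod_cast le_max_right r (α + 1))
  have hPdiff : Differentiable ℂ
      (fun s => ∑ n ∈ Finset.range N, LSeries.term (fun j => (a j : ℂ)) s n) :=
    Differentiable.fun_sum fun n _ => fun s => (LSeries.hasDerivAt_term _ n s).differentiableAt
  have heqG : ∀ s : ℂ, y < s.re →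
      M s - (∑ n ∈ Finset.range N, LSeries.term (fun j => (a j : ℂ)) s n)
        = LSeries (fun n => (f n : ℂ)) s := by
    intro s hs
    have hsa : LSeriesSummable (fun n => (a n : ℂ)) s :=
      LSeriesSummable_of_abscissaOfAbsConv_lt_re (lt_of_le_of_lt haabs
        (by exact_mod_cast lt_of_le_of_lt (le_max_right r (α + 1)) hs))
    have hMa : M s = LSeries (fun n => (a n : ℂ)) s := by
      rw [hMeq s (lt_of_le_of_lt (le_max_right r (α + 1)) hs),
        LSeries_eq_tsum_shift (fun n => (a n : ℂ)) s hsa]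
    have hd : ∀ n : ℕ, LSeries.term (fun j => (f j : ℂ)) s n
        = LSeries.term (fun j => (a j : ℂ)) s n -
          (if n < N then LSeries.term (fun j => (a j : ℂ)) s n else 0) := by
      intro n
      rcases eq_or_ne n 0 with rfl | hn
      · simp [LSeries.term_zero]
      · rw [LSeries.term_of_ne_zero hn, LSeries.term_of_ne_zero hn]
        by_cases hnN : n < N
        · simp [hfdef, hnN]
        · simp [hfdef, hnN]
    have hdz : ∀ n ∉ Finset.range N,
        (if n < N then LSeries.term (fun j => (a j : ℂ)) s n else 0) = 0 := by
      intro n hn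
      rw [if_neg (by simpa using hn)]
    have hdsum : Summable (fun n => if n < N then LSeries.term (fun j => (a j : ℂ)) s n else 0) :=
      summable_of_ne_finset_zero (s := Finset.range N) hdz
    have hfs : LSeries (fun j => (f j : ℂ)) s = LSeries (fun j => (a j : ℂ)) s
        - ∑ n ∈ Finset.range N, LSeries.term (fun j => (a j : ℂ)) s n := by
      rw [LSeries, tsum_congr hd, Summable.tsum_sub hsa hdsum]
      congr 1
      rw [tsum_eq_sum (s := Finset.range N) hdz]
      exact Finset.sum_congr rfl fun n hn => if_pos (Finset.mem_range.mp hn)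
    rw [hfs, hMa]
  have habsf_r : LSeries.abscissaOfAbsConv (fun n => (f n : ℂ)) ≤ (r : EReal) := by
    refine landau f hf0 r y hfabs_y
      (fun s => M s - ∑ n ∈ Finset.range N, LSeries.term (fun j => (a j : ℂ)) s n)
      (hMd.sub hPdiff.differentiableOn) heqG
  -- the squared series
  set A2 : ℕ → ℂ := fun n => ((a n : ℂ)) ^ 2 with hA2
  have hC0 : 0 ≤ C := by
    have h1 := hC 1 le_rfl
    have h2 : (0:ℝ) ≤ |a 1| := abs_nonneg _
    have := h2.trans h1
    simpa using this
  have h2le : LSeries.abscissaOfAbsConv A2 ≤ ((2 * α + 1 : ℝ) : EReal) := by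
    have h1 := LSeries.abscissaOfAbsConv_le_of_le_const_mul_rpow (f := A2)
      ⟨C ^ 2, fun n hn => by
        have hn1 : 1 ≤ n := Nat.one_le_iff_ne_zero.mpr hn
        have hnpos : (0:ℝ) < n := by exact_mod_cast hn1
        simp only [hA2, norm_pow, Complex.norm_real, Real.norm_eq_abs]
        have h2 : |a n| ^ 2 ≤ (C * (n:ℝ) ^ α) ^ 2 :=
          pow_le_pow_left₀ (abs_nonneg _) (hC n hn1) 2
        refine le_trans h2 (le_of_eq ?_)
        rw [mul_pow, ← Real.rpow_natCast ((n:ℝ) ^ α) 2, ← Real.rpow_mul hnpos.le]⟩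
    refine le_trans h1 ?_
    norm_cast
    push_cast
    linarith
  have h2sum : ∀ σ : ℝ, α + r < σ → LSeriesSummable A2 (σ : ℂ) := by
    intro σ hσ
    have hσr : r < σ - α := by linarith
    have hfsummable : LSeriesSummable (fun j => (f j : ℂ)) ((σ - α : ℝ) : ℂ) :=
      LSeriesSummable_of_abscissaOfAbsConv_lt_re (lt_of_le_of_lt habsf_r
        (by rw [Complex.ofReal_re]; exact_mod_cast hσr))
    have hg : Summable (fun n => C * ‖LSeries.term (fun j => (f j : ℂ)) ((σ - α : ℝ) : ℂ) n‖) :=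
      hfsummable.norm.mul_left C
    refine Summable.of_norm_bounded_eventually_nat hg ?_
    filter_upwards [Filter.eventually_ge_atTop (max N 1)] with n hn
    have hnN : N ≤ n := le_trans (le_max_left _ _) hn
    have hn1 : 1 ≤ n := le_trans (le_max_right _ _) hn
    have hn0 : n ≠ 0 := by omega
    have hnpos : (0:ℝ) < n := by exact_mod_cast hn1
    have han : 0 ≤ a n := hN n hnN
    have hfa : f n = a n := by simp [hfdef, Nat.not_lt.mpr hnN]
    rw [LSeries.norm_term_eq, LSeries.norm_term_eq]
    simp only [if_neg hn0, Complex.ofReal_re, hfa]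
    simp only [hA2, norm_pow, Complex.norm_real, Real.norm_eq_abs]
    have hca : a n ≤ C * (n:ℝ) ^ α := le_trans (le_abs_self _) (hC n hn1)
    have habs : |a n| = a n := abs_of_nonneg han
    rw [habs, Real.rpow_sub hnpos, div_div_eq_mul_div, ← mul_div_assoc, ← mul_assoc]
    have hnum : a n ^ 2 ≤ C * a n * (n:ℝ) ^ α := by
      have hrp : (0:ℝ) ≤ (n:ℝ) ^ α := Real.rpow_nonneg hnpos.le α
      nlinarith
    have hden : (0:ℝ) < (n:ℝ) ^ σ := Real.rpow_pos_of_pos hnpos σ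
    exact div_le_div_of_nonneg_right hnum hden.le |>.trans (le_of_eq rfl)
  have h2abs : LSeries.abscissaOfAbsConv A2 ≤ ((α + r : ℝ) : EReal) :=
    LSeries.abscissaOfAbsConv_le_of_forall_lt_LSeriesSummable fun σ hσ => h2sum σ hσ
  refine hsing ⟨LSeries A2, {s : ℂ | (α + r : ℝ) < s.re},
    isOpen_lt continuous_const Complex.continuous_re, ?_, ?_, ?_⟩
  · simp only [Set.mem_setOf_eq, Complex.ofReal_re]
    exact hark
  · refine (LSeries_differentiableOn A2).mono ?_
    rintro s (hs | hs)
    · exact lt_of_le_of_lt h2abs (by exact_mod_cast hs)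
    · exact lt_of_le_of_lt h2le (by exact_mod_cast hs)
  · intro s hs
    have hsum : LSeriesSummable A2 s :=
      LSeriesSummable_of_abscissaOfAbsConv_lt_re (lt_of_le_of_lt h2le (by exact_mod_cast hs))
    rw [LSeries_eq_tsum_shift A2 s hsum]


/-- Theorem 2 of the paper (sign-change criterion): if `a n = O(n^α)` is real, the
Dirichlet series `∑ a n n^{-s}` continues analytically to `Re s > r ≥ 0` with
polynomial growth in `Im s` there, and the Dirichlet series `∑ (a n)^2 n^{-s}` has a
singularity at `s = k > 0` with `α + r < k`, then `(a n)` changes sign infinitely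
often. -/
theorem stmt11 (a : ℕ → ℝ) (α r k : ℝ) (hr : 0 ≤ r) (hk : 0 < k) (hark : α + r < k)
    (hO : ∃ C : ℝ, ∀ n : ℕ, 1 ≤ n → |a n| ≤ C * (n : ℝ) ^ α)
    (hM : ∃ M : ℂ → ℂ, DifferentiableOn ℂ M {s : ℂ | r < s.re} ∧
      (∀ s : ℂ, α + 1 < s.re → M s = ∑' n : ℕ, (a (n + 1) : ℂ) * ((n : ℂ) + 1) ^ (-s)) ∧
      (∀ ε : ℝ, 0 < ε → ∃ C B : ℝ, ∀ s : ℂ, r + ε ≤ s.re →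
        ‖M s‖ ≤ C * (1 + |s.im|) ^ B))
    (hsing : ¬ ∃ (F : ℂ → ℂ) (U : Set ℂ), IsOpen U ∧ (k : ℂ) ∈ U ∧
      DifferentiableOn ℂ F (U ∪ {s : ℂ | 2 * α + 1 < s.re}) ∧
      (∀ s : ℂ, 2 * α + 1 < s.re →
        F s = ∑' n : ℕ, ((a (n + 1)) ^ 2 : ℂ) * ((n : ℂ) + 1) ^ (-s))) :
    {n : ℕ | 0 < a n}.Infinite ∧ {n : ℕ | a n < 0}.Infinite := by
  obtain ⟨M, hMd, hMeq, -⟩ := hM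
  constructor
  · have hO' : ∃ C : ℝ, ∀ n : ℕ, 1 ≤ n → |(-a n)| ≤ C * (n : ℝ) ^ α := by
      obtain ⟨C, hC⟩ := hO
      exact ⟨C, fun n hn => by simpa using hC n hn⟩
    have hMeq' : ∀ s : ℂ, α + 1 < s.re →
        -M s = ∑' n : ℕ, ((-a (n + 1) : ℝ) : ℂ) * ((n : ℂ) + 1) ^ (-s) := by
      intro s hs
      rw [hMeq s hs, ← tsum_neg]
      exact tsum_congr fun n => by push_cast; ring
    have hsing' : ¬ ∃ (F : ℂ → ℂ) (U : Set ℂ), IsOpen U ∧ (k : ℂ) ∈ U ∧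
        DifferentiableOn ℂ F (U ∪ {s : ℂ | 2 * α + 1 < s.re}) ∧
        (∀ s : ℂ, 2 * α + 1 < s.re →
          F s = ∑' n : ℕ, (((-a (n + 1)) : ℝ) : ℂ) ^ 2 * ((n : ℂ) + 1) ^ (-s)) := by
      rintro ⟨F, U, h1, h2, h3, h4⟩
      refine hsing ⟨F, U, h1, h2, h3, fun s hs => ?_⟩
      rw [h4 s hs]
      exact tsum_congr fun n => by push_cast; ring
    have h1 := key (fun n => -a n) α r k hr hk hark hO' (fun s => -M s)
      (hMd.neg) hMeq' hsing'
    have h2 : {n : ℕ | 0 < a n} = {n : ℕ | -a n < 0} := by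
      ext n
      simp [neg_lt_zero]
    rw [h2]
    exact h1
  · exact key a α r k hr hk hark hO M hMd hMeq hsing
end

section
/- Let (a_n)_{n≥1} be real numbers with a_n = O(n^α), and suppose M(s) = ∑_{n≥1} a_n n^{-s} extends analytically to Re(s) > r ≥ 0 with polynomial growth in vertical strips there. Then for every ε > 0, ∑_{n≥1} a_n e^{-n/x} = O(x^{r+ε}) as x → ∞. -/
open Complex Real Set MeasureTheory Filter intervalIntegral

set_option maxHeartbeats 1000000

lemma abs_Gamma_le_re {s : ℂ} (hs : 0 < s.re) :
    ‖Complex.Gamma s‖ ≤ Real.Gamma s.re := by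
  rw [Complex.Gamma_eq_integral hs, Real.Gamma_eq_integral hs]
  calc ‖Complex.GammaIntegral s‖
      ≤ ∫ t in Ioi (0:ℝ), ‖(Real.exp (-t) : ℂ) * (t:ℂ) ^ (s - 1)‖ :=
        norm_integral_le_integral_norm (fun t => (Real.exp (-t) : ℂ) * (t:ℂ) ^ (s - 1))
    _ = ∫ t in Ioi (0:ℝ), Real.exp (-t) * t ^ (s.re - 1) := by
        refine setIntegral_congr_fun measurableSet_Ioi (fun t ht => ?_)
        rw [norm_mul,
          Complex.norm_cpow_eq_rpow_re_of_pos ht, Complex.norm_real, Real.norm_eq_abs,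
          abs_of_pos (Real.exp_pos _), Complex.sub_re, Complex.one_re]

lemma abs_Gamma_mul_pow_le (k : ℕ) : ∀ {s : ℂ}, 0 < s.re →
    ‖Complex.Gamma s‖ * |s.im| ^ k ≤ Real.Gamma (s.re + k) := by
  induction k with
  | zero => intro s hs; simpa using abs_Gamma_le_re hs
  | succ k ih =>
    intro s hs
    have hs0 : s ≠ 0 := by
      intro h; rw [h] at hs; simp at hs
    have h1 : ‖Complex.Gamma s‖ * |s.im| ≤ ‖Complex.Gamma (s + 1)‖ := by
      rw [Complex.Gamma_add_one s hs0, norm_mul]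
      have : |s.im| ≤ ‖s‖ := Complex.abs_im_le_norm s
      nlinarith [norm_nonneg (Complex.Gamma s), norm_nonneg s]
    have hre : 0 < (s + 1).re := by simp; linarith
    have h2 := ih hre
    have him : (s + 1).im = s.im := by simp
    rw [him] at h2
    calc ‖Complex.Gamma s‖ * |s.im| ^ (k + 1)
        = (‖Complex.Gamma s‖ * |s.im|) * |s.im| ^ k := by ring
      _ ≤ ‖Complex.Gamma (s + 1)‖ * |s.im| ^ k := by
          exact mul_le_mul_of_nonneg_right h1 (by positivity)
      _ ≤ Real.Gamma ((s + 1).re + k) := h2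
      _ = Real.Gamma (s.re + (k + 1 : ℕ)) := by rw [Complex.add_re, Complex.one_re]; push_cast; ring_nf



lemma gamma_strip_bound {σ₀ σ₁ : ℝ} (h0 : 0 < σ₀) (k : ℕ) :
    ∃ c : ℝ, 0 ≤ c ∧ ∀ s : ℂ, σ₀ ≤ s.re → s.re ≤ σ₁ →
      ‖Complex.Gamma s‖ * (1 + |s.im|) ^ k ≤ c := by
  obtain ⟨G, hG⟩ : ∃ G, ∀ x ∈ Icc σ₀ (σ₁ + k), ‖Real.Gamma x‖ ≤ G := by
    refine isCompact_Icc.exists_bound_of_continuousOn (fun x hx => ?_)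
    have hx0 : 0 < x := lt_of_lt_of_le h0 hx.1
    refine (Real.differentiableAt_Gamma (fun m => ?_)).continuousAt.continuousWithinAt
    intro h; rw [h] at hx0
    have : (0:ℝ) ≤ m := Nat.cast_nonneg m
    linarith
  set G' := max G 0 with hG'
  refine ⟨2 ^ k * G', by positivity, fun s hs1 hs2 => ?_⟩
  have hs0 : 0 < s.re := lt_of_lt_of_le h0 hs1
  have hΓ1 : ‖Complex.Gamma s‖ ≤ G' := by
    refine le_trans (abs_Gamma_le_re hs0) (le_trans (le_abs_self _) (le_max_of_le_left ?_))
    exact (Real.norm_eq_abs _ ▸ hG s.re ⟨hs1, by linarith [Nat.cast_nonneg (α := ℝ) k]⟩)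
  have hΓ2 : ‖Complex.Gamma s‖ * |s.im| ^ k ≤ G' := by
    refine le_trans (abs_Gamma_mul_pow_le k hs0) (le_trans (le_abs_self _)
      (le_max_of_le_left ?_))
    exact (Real.norm_eq_abs _ ▸ hG (s.re + k) ⟨by linarith [Nat.cast_nonneg (α := ℝ) k],
      by linarith⟩)
  rcases le_total |s.im| 1 with hy | hy
  · have h1 : (1 + |s.im|) ^ k ≤ 2 ^ k := by
      refine pow_le_pow_left₀ (by positivity) (by linarith) k
    calc ‖Complex.Gamma s‖ * (1 + |s.im|) ^ k
        ≤ G' * 2 ^ k := mul_le_mul hΓ1 h1 (by positivity) (le_max_right _ _)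
      _ = 2 ^ k * G' := by ring
  · have h1 : (1 + |s.im|) ^ k ≤ 2 ^ k * |s.im| ^ k := by
      rw [← mul_pow]
      refine pow_le_pow_left₀ (by positivity) (by linarith) k
    calc ‖Complex.Gamma s‖ * (1 + |s.im|) ^ k
        ≤ ‖Complex.Gamma s‖ * (2 ^ k * |s.im| ^ k) :=
          mul_le_mul_of_nonneg_left h1 (norm_nonneg _)
      _ = 2 ^ k * (‖Complex.Gamma s‖ * |s.im| ^ k) := by ring
      _ ≤ 2 ^ k * G' := mul_le_mul_of_nonneg_left hΓ2 (by positivity)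

lemma summable_rpow_shift {c : ℝ} (hc : c < -1) : Summable (fun n : ℕ => ((n:ℝ)+1) ^ c) := by
  have h := (Real.summable_nat_rpow (p := c)).mpr hc
  have h2 := (summable_nat_add_iff (f := fun n : ℕ => (n:ℝ) ^ c) 1).mpr h
  refine h2.congr (fun n => ?_)
  push_cast
  rfl

lemma summable_rpow_mul_exp (β : ℝ) {t : ℝ} (ht : 0 < t) :
    Summable (fun n : ℕ => ((n:ℝ)+1) ^ β * Real.exp (-(((n:ℝ)+1) * t))) := by
  set k := ⌈β⌉₊ with hk
  have hρ : ‖Real.exp (-t)‖ < 1 := by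
    rw [Real.norm_eq_abs, abs_of_pos (Real.exp_pos _)]
    exact Real.exp_lt_one_iff.mpr (by linarith)
  have h := summable_pow_mul_geometric_of_norm_lt_one (R := ℝ) k hρ
  have h2 := (summable_nat_add_iff (f := fun n : ℕ => (n:ℝ) ^ k * Real.exp (-t) ^ n) 1).mpr h
  refine Summable.of_nonneg_of_le (fun n => by positivity) (fun n => ?_) h2
  have h1n : (1:ℝ) ≤ (n:ℝ) + 1 := by have := Nat.cast_nonneg (α := ℝ) n; linarith
  have hb : ((n:ℝ)+1) ^ β ≤ ((n:ℝ)+1) ^ (k:ℝ) :=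
    Real.rpow_le_rpow_of_exponent_le h1n (Nat.le_ceil β)
  have he : Real.exp (-(((n:ℝ)+1) * t)) = Real.exp (-t) ^ (n+1) := by
    rw [← Real.exp_nat_mul]
    congr 1
    push_cast
    ring
  calc ((n:ℝ)+1) ^ β * Real.exp (-(((n:ℝ)+1) * t))
      ≤ ((n:ℝ)+1) ^ (k:ℝ) * Real.exp (-(((n:ℝ)+1) * t)) :=
        mul_le_mul_of_nonneg_right hb (Real.exp_pos _).le
    _ = ((n+1:ℕ):ℝ) ^ k * Real.exp (-t) ^ (n+1) := by
        rw [Real.rpow_natCast, he]; push_cast; ring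
    _ = (fun n : ℕ => (n:ℝ) ^ k * Real.exp (-t) ^ n) (n+1) := rfl

lemma ennnorm_tsum_le' (F : ℕ → ℂ) : (‖∑' n, F n‖₊ : ENNReal) ≤ ∑' n, (‖F n‖₊ : ENNReal) := by
  by_cases h : Summable (fun n => ‖F n‖₊)
  · rw [← ENNReal.coe_tsum h]
    exact ENNReal.coe_le_coe.mpr (nnnorm_tsum_le h)
  · have : ∑' n, (‖F n‖₊ : ENNReal) = ⊤ := by
      by_contra hne
      exact h (ENNReal.tsum_coe_ne_top_iff_summable.mp hne)
    simp [this]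

lemma integrableOn_tsum_aux {F : ℕ → ℝ → ℂ} {S : Set ℝ}
    (hmeas : AEStronglyMeasurable (fun t => ∑' n, F n t) (volume.restrict S))
    (hint : ∀ n, IntegrableOn (F n) S)
    (hsum : Summable fun n => ∫ t in S, ‖F n t‖) :
    IntegrableOn (fun t => ∑' n, F n t) S := by
  refine ⟨hmeas, ?_⟩
  rw [HasFiniteIntegral]
  calc ∫⁻ t in S, ‖∑' n, F n t‖₊
      ≤ ∫⁻ t in S, ∑' n, (‖F n t‖₊ : ENNReal) :=
        lintegral_mono (fun t => ennnorm_tsum_le' _)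
    _ = ∑' n, ∫⁻ t in S, (‖F n t‖₊ : ENNReal) :=
        lintegral_tsum (fun n => (hint n).1.enorm)
    _ = ∑' n, ENNReal.ofReal (∫ t in S, ‖F n t‖) := by
        refine tsum_congr (fun n => ?_)
        exact (ofReal_integral_norm_eq_lintegral_enorm (hint n)).symm
    _ = ENNReal.ofReal (∑' n, ∫ t in S, ‖F n t‖) :=
        (ENNReal.ofReal_tsum_of_nonneg (fun n => integral_nonneg (fun t => norm_nonneg _)) hsum).symm
    _ < ⊤ := ENNReal.ofReal_lt_top

lemma integrableOn_cpow_mul_exp {s : ℂ} (hs : 0 < s.re) {b : ℝ} (hb : 0 < b) :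
    IntegrableOn (fun t : ℝ => (t:ℂ) ^ (s-1) * Real.exp (-(b * t))) (Ioi 0) := by
  have h := Complex.GammaIntegral_convergent hs
  rw [← mul_zero b, ← integrableOn_Ioi_comp_mul_left_iff _ _ hb] at h
  refine (IntegrableOn.congr_fun (h.const_mul ((1:ℂ) / b ^ (s-1)))
    (fun t (ht : 0 < t) => ?_) measurableSet_Ioi)
  show (1:ℂ) / b ^ (s-1) * ((Real.exp (-(b*t)) : ℝ) * (b*t:ℝ) ^ (s-1)) = _
  rw [ofReal_mul, mul_cpow_ofReal_nonneg hb.le ht.le]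
  have hbne : (b:ℂ) ^ (s-1) ≠ 0 := by
    rw [Ne, cpow_eq_zero_iff, not_and_or]
    exact Or.inl (ofReal_ne_zero.mpr hb.ne')
  field_simp


section FProps

variable {A : ℕ → ℂ} {Ca β : ℝ} (hCa : 0 ≤ Ca)
  (hA : ∀ n : ℕ, ‖A n‖ ≤ Ca * ((n:ℝ)+1) ^ β)

lemma term_norm (n : ℕ) (t : ℝ) : ‖A n * Real.exp (-((n:ℝ)+1) * t)‖
    = ‖A n‖ * Real.exp (-(((n:ℝ)+1) * t)) := by
  rw [norm_mul, Complex.norm_real, Real.norm_eq_abs, abs_of_pos (Real.exp_pos _), neg_mul]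

include hA in
lemma f_summable {t : ℝ} (ht : 0 < t) :
    Summable (fun n : ℕ => A n * Real.exp (-((n:ℝ)+1) * t)) := by
  refine Summable.of_norm ?_
  refine Summable.of_nonneg_of_le (fun n => norm_nonneg _) (fun n => ?_)
    ((summable_rpow_mul_exp β ht).mul_left Ca)
  rw [term_norm]
  exact mul_le_mul_of_nonneg_right (hA n) (Real.exp_pos _).le |>.trans (le_of_eq (by ring))

include hCa hA in
lemma f_continuousAt {t : ℝ} (ht : 0 < t) :
    ContinuousAt (fun u : ℝ => ∑' n : ℕ, A n * Real.exp (-((n:ℝ)+1) * u)) t := by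
  have h2 : (0:ℝ) < t/2 := by linarith
  refine ContinuousOn.continuousAt (s := Ioi (t/2)) ?_ (Ioi_mem_nhds (by linarith))
  refine continuousOn_tsum (fun n => ?_) ((summable_rpow_mul_exp β h2).mul_left Ca)
    (fun n u hu => ?_)
  · exact (Continuous.continuousOn (by continuity))
  · rw [term_norm]
    have h1 : ‖A n‖ * Real.exp (-(((n:ℝ)+1) * u)) ≤
        (Ca * ((n:ℝ)+1) ^ β) * Real.exp (-(((n:ℝ)+1) * (t/2))) := by
      refine mul_le_mul (hA n) ?_ (Real.exp_pos _).le (by positivity)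
      refine Real.exp_le_exp.mpr ?_
      have : (0:ℝ) < (n:ℝ)+1 := by positivity
      rw [neg_le_neg_iff]
      exact mul_le_mul_of_nonneg_left (le_of_lt hu) this.le
    linarith [h1]

include hA in
lemma f_mellin_eq {Mv : ℂ} {s : ℂ} (hs : 0 < s.re) (hβs : β + 1 < s.re)
    (hMv : HasSum (fun n : ℕ => A n * ((n:ℂ)+1) ^ (-s)) Mv) :
    mellin (fun t => ∑' n : ℕ, A n * Real.exp (-((n:ℝ)+1) * t)) s = Complex.Gamma s * Mv := by
  have hp : ∀ n : ℕ, A n = 0 ∨ 0 < (n:ℝ)+1 := fun n => Or.inr (by positivity)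
  have h_sum : Summable fun n : ℕ => ‖A n‖ / ((n:ℝ)+1) ^ s.re := by
    refine Summable.of_nonneg_of_le (fun n => by positivity) (fun n => ?_)
      ((summable_rpow_shift (c := β - s.re) (by linarith)).mul_left Ca)
    rw [div_eq_mul_inv, ← Real.rpow_neg (by positivity)]
    calc ‖A n‖ * ((n:ℝ)+1) ^ (-s.re)
        ≤ (Ca * ((n:ℝ)+1) ^ β) * ((n:ℝ)+1) ^ (-s.re) :=
          mul_le_mul_of_nonneg_right (hA n) (by positivity)
      _ = Ca * ((n:ℝ)+1) ^ (β - s.re) := by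
          rw [mul_assoc, ← Real.rpow_add (by positivity)]; ring_nf
  have hF : ∀ t ∈ Ioi (0:ℝ), HasSum (fun n : ℕ => A n * Real.exp (-((n:ℝ)+1) * t))
      (∑' n : ℕ, A n * Real.exp (-((n:ℝ)+1) * t)) := by
    intro t ht
    have hAle : ∀ n : ℕ, ‖A n‖ ≤ Ca * ((n:ℝ)+1) ^ β := hA
    exact (f_summable hAle ht).hasSum
  have key := hasSum_mellin (a := A) (p := fun n : ℕ => (n:ℝ)+1)
    (F := fun t => ∑' n : ℕ, A n * Real.exp (-((n:ℝ)+1) * t)) hp hs hF h_sum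
  rw [← key.tsum_eq]
  have : ∀ n : ℕ, Complex.Gamma s * A n / ((((n:ℝ)+1) : ℝ) : ℂ) ^ s
      = Complex.Gamma s * (A n * ((n:ℂ)+1) ^ (-s)) := by
    intro n
    have hcast : ((((n:ℝ)+1) : ℝ) : ℂ) = (n:ℂ)+1 := by push_cast; ring
    rw [hcast, cpow_neg, div_eq_mul_inv]
    ring
  rw [tsum_congr this, tsum_mul_left, hMv.tsum_eq]

include hCa hA in
lemma f_mellin_convergent {σ : ℝ} (hσ : 0 < σ) (hβσ : β + 1 < σ) :
    MellinConvergent (fun t => ∑' n : ℕ, A n * Real.exp (-((n:ℝ)+1) * t)) (σ : ℂ) := by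
  unfold MellinConvergent
  have heq : ∀ t ∈ Ioi (0:ℝ), ((t:ℂ) ^ ((σ:ℂ) - 1)) • (∑' n : ℕ, A n * Real.exp (-((n:ℝ)+1) * t))
      = ∑' n : ℕ, (t:ℂ) ^ ((σ:ℂ) - 1) * (A n * Real.exp (-((n:ℝ)+1) * t)) := by
    intro t ht
    rw [smul_eq_mul, ← tsum_mul_left]
  refine IntegrableOn.congr_fun ?_ (fun t ht => (heq t ht).symm) measurableSet_Ioi
  have hσre : 0 < (σ:ℂ).re := by simpa using hσ
  refine integrableOn_tsum_aux ?_ (fun n => ?_) ?_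
  · -- measurability
    refine AEStronglyMeasurable.congr
      (f := fun t : ℝ => ((t:ℂ) ^ ((σ:ℂ) - 1)) • (∑' n : ℕ, A n * ((Real.exp (-((n:ℝ)+1) * t) : ℝ) : ℂ))) ?_ ?_
    · apply ContinuousOn.aestronglyMeasurable ?_ measurableSet_Ioi
      refine ContinuousOn.fun_smul ?_ ?_
      · exact fun t ht => (Complex.continuousAt_ofReal_cpow_const _ _
          (Or.inr (ne_of_gt ht))).continuousWithinAt
      · exact fun t ht => ((f_continuousAt hCa hA ht).continuousWithinAt)
    · filter_upwards [ae_restrict_mem measurableSet_Ioi] with t ht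
      exact heq t ht
  · -- integrability of each term
    have h : IntegrableOn
        (fun t : ℝ => A n * ((t:ℂ) ^ ((σ:ℂ)-1) * ((Real.exp (-(((n:ℝ)+1) * t)) : ℝ) : ℂ)))
        (Ioi 0) := (integrableOn_cpow_mul_exp (s := (σ:ℂ)) hσre
      (b := (n:ℝ)+1) (by positivity)).const_mul (A n)
    refine h.congr_fun (fun t ht => ?_) measurableSet_Ioi
    rw [neg_mul]
    ring
  · -- summability of norms
    have hval : ∀ n : ℕ, (∫ t in Ioi (0:ℝ),
        ‖(t:ℂ) ^ ((σ:ℂ) - 1) * (A n * Real.exp (-((n:ℝ)+1) * t))‖)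
        = ‖A n‖ * ((1/((n:ℝ)+1)) ^ σ * Real.Gamma σ) := by
      intro n
      rw [← Real.integral_rpow_mul_exp_neg_mul_Ioi hσ (r := (n:ℝ)+1) (by positivity)]
      rw [← MeasureTheory.integral_const_mul]
      refine setIntegral_congr_fun measurableSet_Ioi (fun t ht => ?_)
      rw [norm_mul, term_norm, Complex.norm_cpow_eq_rpow_re_of_pos ht]
      simp only [Complex.sub_re, Complex.ofReal_re, Complex.one_re]
      ring
    simp_rw [hval]
    refine Summable.of_nonneg_of_le (fun n => by positivity) (fun n => ?_)
      (((summable_rpow_shift (c := β - σ) (by linarith)).mul_left (Ca * Real.Gamma σ)))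
    have h1 : (1/((n:ℝ)+1)) ^ σ = ((n:ℝ)+1) ^ (-σ) := by
      rw [one_div, Real.inv_rpow (by positivity : (0:ℝ) ≤ (n:ℝ)+1),
        Real.rpow_neg (by positivity : (0:ℝ) ≤ (n:ℝ)+1)]
    rw [h1]
    calc ‖A n‖ * (((n:ℝ)+1) ^ (-σ) * Real.Gamma σ)
        ≤ (Ca * ((n:ℝ)+1) ^ β) * (((n:ℝ)+1) ^ (-σ) * Real.Gamma σ) := by
          refine mul_le_mul_of_nonneg_right (hA n)
            (mul_nonneg (by positivity) (Real.Gamma_pos_of_pos hσ).le)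
      _ = Ca * Real.Gamma σ * ((n:ℝ)+1) ^ (β - σ) := by
          rw [sub_eq_add_neg, Real.rpow_add (by positivity : (0:ℝ) < (n:ℝ)+1)]
          ring
end FProps

lemma vertical_shift {h : ℂ → ℂ} {σ₀ σ₁ c : ℝ} (hle : σ₀ ≤ σ₁)
    (hd : ∀ s : ℂ, σ₀ ≤ s.re → s.re ≤ σ₁ → DifferentiableAt ℂ h s)
    (hdecay : ∀ s : ℂ, σ₀ ≤ s.re → s.re ≤ σ₁ → 1 ≤ |s.im| →
      ‖h s‖ ≤ c / s.im ^ 2)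
    (hi₀ : Integrable (fun y : ℝ => h ((σ₀:ℂ) + y * I)))
    (hi₁ : Integrable (fun y : ℝ => h ((σ₁:ℂ) + y * I))) :
    (∫ y : ℝ, h ((σ₀:ℂ) + y * I)) = ∫ y : ℝ, h ((σ₁:ℂ) + y * I) := by
  have key : ∀ T : ℝ, 1 ≤ T →
      I • (∫ y in (-T)..T, h ((σ₀:ℂ) + y * I)) =
      I • (∫ y in (-T)..T, h ((σ₁:ℂ) + y * I)) +
      ((∫ x in σ₀..σ₁, h ((x:ℂ) + (-T) * I)) - (∫ x in σ₀..σ₁, h ((x:ℂ) + T * I))) := by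
    intro T hT
    have hz : ((σ₀:ℂ) + (-T) * I).re = σ₀ ∧ ((σ₀:ℂ) + (-T) * I).im = -T := by simp
    have hw : ((σ₁:ℂ) + T * I).re = σ₁ ∧ ((σ₁:ℂ) + T * I).im = T := by simp
    have hrect := Complex.integral_boundary_rect_eq_zero_of_differentiableOn h
      ((σ₀:ℂ) + (-T) * I) ((σ₁:ℂ) + T * I) ?_
    · rw [hz.1, hz.2, hw.1, hw.2] at hrect
      push_cast at hrect ⊢
      simp only [smul_eq_mul] at hrect ⊢
      linear_combination -hrect
    · intro s hs
      rw [hz.1, hz.2, hw.1, hw.2] at hs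
      rw [Complex.mem_reProdIm, uIcc_of_le hle] at hs
      exact (hd s hs.1.1 hs.1.2).differentiableWithinAt
  have hV₀ : Tendsto (fun T : ℝ => I • ∫ y in (-T)..T, h ((σ₀:ℂ) + y * I)) atTop
      (nhds (I • ∫ y : ℝ, h ((σ₀:ℂ) + y * I))) :=
    (intervalIntegral_tendsto_integral hi₀ tendsto_neg_atTop_atBot tendsto_id).const_smul I
  have hV₁ : Tendsto (fun T : ℝ => I • ∫ y in (-T)..T, h ((σ₁:ℂ) + y * I)) atTop
      (nhds (I • ∫ y : ℝ, h ((σ₁:ℂ) + y * I))) :=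
    (intervalIntegral_tendsto_integral hi₁ tendsto_neg_atTop_atBot tendsto_id).const_smul I
  have hH : Tendsto (fun T : ℝ =>
      ((∫ x in σ₀..σ₁, h ((x:ℂ) + (-T) * I)) - (∫ x in σ₀..σ₁, h ((x:ℂ) + T * I))))
      atTop (nhds 0) := by
    have hb : ∀ T : ℝ, 1 ≤ T → ∀ (T' : ℝ), |T'| = T →
        ‖∫ x in σ₀..σ₁, h ((x:ℂ) + T' * I)‖ ≤ c / T ^ 2 * |σ₁ - σ₀| := by
      intro T hT T' hT'
      refine intervalIntegral.norm_integral_le_of_norm_le_const (fun x hx => ?_)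
      rw [uIoc_of_le hle] at hx
      have h1 : ((x:ℂ) + T' * I).re = x := by simp
      have h2 : ((x:ℂ) + T' * I).im = T' := by simp
      have := hdecay ((x:ℂ) + T' * I) (by rw [h1]; exact hx.1.le) (by rw [h1]; exact hx.2)
        (by rw [h2, hT']; exact hT)
      rw [h2] at this
      rw [show T ^ 2 = T' ^ 2 by rw [← hT', _root_.sq_abs]]
      exact this
    have hgto : Tendsto (fun T : ℝ => c / T ^ 2 * |σ₁ - σ₀| + c / T ^ 2 * |σ₁ - σ₀|) atTop
        (nhds 0) := by
      have : Tendsto (fun T : ℝ => c / T ^ 2) atTop (nhds 0) :=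
        Tendsto.div_atTop tendsto_const_nhds (tendsto_pow_atTop two_ne_zero)
      simpa using ((this.mul_const _).add (this.mul_const _))
    refine squeeze_zero_norm' ?_ hgto
    filter_upwards [eventually_ge_atTop (1:ℝ)] with T hT
    refine (norm_sub_le _ _).trans ?_
    have b1 := hb T hT (-T) (by rw [abs_neg, abs_of_pos (by linarith)])
    have b2 := hb T hT T (abs_of_pos (by linarith))
    push_cast at b1
    exact add_le_add b1 b2
  have hcomb : Tendsto (fun T : ℝ => I • (∫ y in (-T)..T, h ((σ₁:ℂ) + y * I)) +
      ((∫ x in σ₀..σ₁, h ((x:ℂ) + (-T) * I)) - (∫ x in σ₀..σ₁, h ((x:ℂ) + T * I))))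
      atTop (nhds (I • ∫ y : ℝ, h ((σ₁:ℂ) + y * I))) := by
    simpa using hV₁.add hH
  have heq : I • (∫ y : ℝ, h ((σ₀:ℂ) + y * I)) = I • ∫ y : ℝ, h ((σ₁:ℂ) + y * I) := by
    refine tendsto_nhds_unique ?_ hcomb
    refine hV₀.congr' ?_
    filter_upwards [eventually_ge_atTop (1:ℝ)] with T hT
    exact key T hT
  have hIne : (I : ℂ) ≠ 0 := I_ne_zero
  rwa [smul_right_injective ℂ hIne |>.eq_iff] at heq

/-- Estimate (3.2): if `a n = O(n^α)` and the Dirichlet series `M(s) = ∑ a n n^{-s}`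
continues analytically to `Re s > r ≥ 0` with polynomial growth in vertical strips,
then `∑_{n ≥ 1} a n e^{-n/x} = O(x^{r+ε})` for every `ε > 0`. -/
theorem stmt12 (a : ℕ → ℝ) (α r : ℝ) (hr : 0 ≤ r)
    (hO : ∃ C : ℝ, ∀ n : ℕ, 1 ≤ n → |a n| ≤ C * (n : ℝ) ^ α)
    (hM : ∃ M : ℂ → ℂ, DifferentiableOn ℂ M {s : ℂ | r < s.re} ∧
      (∀ s : ℂ, α + 1 < s.re → M s = ∑' n : ℕ, (a (n + 1) : ℂ) * ((n : ℂ) + 1) ^ (-s)) ∧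
      (∀ ε : ℝ, 0 < ε → ∃ C B : ℝ, ∀ s : ℂ, r + ε ≤ s.re →
        ‖M s‖ ≤ C * (1 + |s.im|) ^ B)) :
    ∀ ε : ℝ, 0 < ε → ∃ C : ℝ, ∀ x : ℝ, 1 ≤ x →
      |∑' n : ℕ, a (n + 1) * Real.exp (-((n : ℝ) + 1) / x)| ≤ C * x ^ (r + ε) := by
  intro ε hε
  obtain ⟨Ca₀, hCa₀⟩ := hO
  obtain ⟨M, hMd, hMeq, hMg⟩ := hM
  set Ca : ℝ := max Ca₀ 0 with hCadef
  have hCa : 0 ≤ Ca := le_max_right _ _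
  set A : ℕ → ℂ := fun n => (a (n+1) : ℂ) with hAdef
  have hA : ∀ n : ℕ, ‖A n‖ ≤ Ca * ((n:ℝ)+1) ^ α := by
    intro n
    have h1 := hCa₀ (n+1) (Nat.le_add_left 1 n)
    have h2 : ((n+1:ℕ):ℝ) = (n:ℝ)+1 := by push_cast; ring
    rw [h2] at h1
    have : ‖A n‖ = |a (n+1)| := by rw [hAdef]; exact (Complex.norm_real _).trans (Real.norm_eq_abs _)
    rw [this]
    refine h1.trans (mul_le_mul_of_nonneg_right (le_max_left _ _) (by positivity))
  -- parameters
  set ε' : ℝ := min ε 1 with hε'def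
  have hε' : 0 < ε' := lt_min hε one_pos
  have hε'le : ε' ≤ ε := min_le_left _ _
  have hε'1 : ε' ≤ 1 := min_le_right _ _
  set σ₀ : ℝ := r + ε' with hσ₀def
  have hσ₀pos : 0 < σ₀ := by positivity
  have hrσ₀ : r < σ₀ := by simp [hσ₀def, hε']
  set σ₁ : ℝ := max (α+1) r + 2 with hσ₁def
  have hα₁ : α + 1 < σ₁ := by
    have := le_max_left (α+1) r; simp only [hσ₁def]; linarith
  have hrσ₁ : r < σ₁ := by
    have := le_max_right (α+1) r; simp only [hσ₁def]; linarith
  have hσ₀₁ : σ₀ ≤ σ₁ := by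
    have := le_max_right (α+1) r; simp only [hσ₀def, hσ₁def]; linarith
  have hσ₁pos : 0 < σ₁ := lt_of_le_of_lt hr hrσ₁
  -- growth bound for M
  obtain ⟨C₀, B₀, hMB₀⟩ := hMg ε' hε'
  set CM : ℝ := max C₀ 0 with hCMdef
  have hCM : 0 ≤ CM := le_max_right _ _
  set B : ℝ := max B₀ 0 with hBdef
  have hB : 0 ≤ B := le_max_right _ _
  have hMB : ∀ s : ℂ, σ₀ ≤ s.re → ‖M s‖ ≤ CM * (1 + |s.im|) ^ B := by
    intro s hs
    have h1 := hMB₀ s hs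
    have hbase : (1:ℝ) ≤ 1 + |s.im| := by simp [abs_nonneg]
    calc ‖M s‖ ≤ C₀ * (1 + |s.im|) ^ B₀ := h1
      _ ≤ CM * (1 + |s.im|) ^ B₀ :=
          mul_le_mul_of_nonneg_right (le_max_left _ _) (by positivity)
      _ ≤ CM * (1 + |s.im|) ^ B :=
          mul_le_mul_of_nonneg_left
            (Real.rpow_le_rpow_of_exponent_le hbase (le_max_left _ _)) hCM
  set k : ℕ := ⌈B⌉₊ + 2 with hkdef
  have hkB : B + 2 ≤ (k:ℝ) := by
    have := Nat.le_ceil B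
    simp only [hkdef]; push_cast; linarith
  obtain ⟨cΓ, hcΓ0, hcΓ⟩ := gamma_strip_bound (σ₁ := σ₁) hσ₀pos k
  -- the analytic integrand
  set h : ℂ → ℂ := fun s => Complex.Gamma s * M s with hhdef
  have hopen : IsOpen {s : ℂ | r < s.re} := isOpen_lt continuous_const Complex.continuous_re
  have hdiff : ∀ s : ℂ, r < s.re → DifferentiableAt ℂ h s := by
    intro s hs
    have hs0 : 0 < s.re := lt_of_le_of_lt hr hs
    have hΓ : DifferentiableAt ℂ Complex.Gamma s := by
      refine Complex.differentiableAt_Gamma s (fun m => ?_)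
      intro hcon
      rw [hcon] at hs0
      simp only [Complex.neg_re, Complex.natCast_re] at hs0
      have : (0:ℝ) ≤ m := Nat.cast_nonneg m
      linarith
    exact hΓ.mul (hMd.differentiableAt (hopen.mem_nhds hs))
  have hbound : ∀ s : ℂ, σ₀ ≤ s.re → s.re ≤ σ₁ →
      ‖h s‖ ≤ cΓ * CM * ((1 + |s.im|) ^ B * ((1 + |s.im|) ^ k)⁻¹) := by
    intro s h0 h1
    have hbase : (0:ℝ) < 1 + |s.im| := by positivity
    have hΓb : ‖Complex.Gamma s‖ ≤ cΓ * ((1 + |s.im|) ^ k)⁻¹ := by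
      rw [← div_eq_mul_inv, le_div_iff₀ (by positivity : (0:ℝ) < (1 + |s.im|) ^ k)]
      exact hcΓ s h0 h1
    calc ‖h s‖ = ‖Complex.Gamma s‖ * ‖M s‖ := norm_mul _ _
      _ ≤ (cΓ * ((1 + |s.im|) ^ k)⁻¹) * (CM * (1 + |s.im|) ^ B) :=
          mul_le_mul hΓb (hMB s h0) (norm_nonneg _) (by positivity)
      _ = cΓ * CM * ((1 + |s.im|) ^ B * ((1 + |s.im|) ^ k)⁻¹) := by ring
  have hBk : ∀ y : ℝ, (1 + |y|) ^ B * ((1 + |y|) ^ k)⁻¹ ≤ (1 + y^2)⁻¹ := by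
    intro y
    have hbase : (1:ℝ) ≤ 1 + |y| := by simp [abs_nonneg]
    have hbase0 : (0:ℝ) < 1 + |y| := by linarith
    have e1 : (1 + |y|) ^ B * ((1 + |y|) ^ k)⁻¹ = (1 + |y|) ^ (B - k) := by
      rw [← Real.rpow_natCast (1 + |y|) k, ← Real.rpow_neg hbase0.le,
        ← Real.rpow_add hbase0, ← sub_eq_add_neg]
    rw [e1]
    have e2 : (1 + |y|) ^ (B - (k:ℝ)) ≤ (1 + |y|) ^ (-2 : ℝ) :=
      Real.rpow_le_rpow_of_exponent_le hbase (by linarith)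
    refine e2.trans ?_
    rw [show ((-2:ℝ)) = -((2:ℕ):ℝ) by norm_num, Real.rpow_neg hbase0.le, Real.rpow_natCast]
    refine inv_anti₀ (by positivity) ?_
    nlinarith [abs_nonneg y, _root_.sq_abs y]
  -- continuation
  have hcont_h : ∀ s : ℂ, r < s.re → ContinuousAt h s := fun s hs => (hdiff s hs).continuousAt
  have hlinec : ∀ σ : ℝ, Continuous (fun y : ℝ => (σ:ℂ) + y * I) := by
    intro σ
    exact continuous_const.add (Complex.continuous_ofReal.mul continuous_const)
  have hdecay_h : ∀ s : ℂ, σ₀ ≤ s.re → s.re ≤ σ₁ → 1 ≤ |s.im| →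
      ‖h s‖ ≤ cΓ * CM / s.im ^ 2 := by
    intro s h0 h1 h2
    refine (hbound s h0 h1).trans ?_
    rw [div_eq_mul_inv]
    refine mul_le_mul_of_nonneg_left ((hBk s.im).trans ?_) (by positivity)
    refine inv_anti₀ (by nlinarith [_root_.sq_abs s.im]) (by nlinarith)
  have hIntLine : ∀ σ : ℝ, σ₀ ≤ σ → σ ≤ σ₁ → Integrable (fun y : ℝ => h ((σ:ℂ) + y * I)) := by
    intro σ hσa hσb
    have hcont : Continuous (fun y : ℝ => h ((σ:ℂ) + y * I)) := by
      refine continuous_iff_continuousAt.mpr (fun y => ?_)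
      refine (hcont_h _ ?_).comp (hlinec σ).continuousAt
      have : ((σ:ℂ) + (y:ℂ) * I).re = σ := by simp
      rw [this]
      linarith
    refine Integrable.mono' (g := fun y => cΓ * CM * (1 + y^2)⁻¹)
      ((integrable_inv_one_add_sq).const_mul _) hcont.aestronglyMeasurable ?_
    filter_upwards with y
    have hre : ((σ:ℂ) + y*I).re = σ := by simp
    have him : ((σ:ℂ) + y*I).im = y := by simp
    have hb := hbound ((σ:ℂ)+y*I) (by rw [hre]; exact hσa) (by rw [hre]; exact hσb)
    rw [him] at hb
    exact hb.trans (mul_le_mul_of_nonneg_left (hBk y) (by positivity))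
  have hMhasSum : ∀ s : ℂ, α + 1 < s.re →
      HasSum (fun n : ℕ => A n * ((n:ℂ)+1) ^ (-s)) (M s) := by
    intro s hs
    rw [hMeq s hs]
    refine Summable.hasSum ?_
    refine Summable.of_norm ?_
    refine Summable.of_nonneg_of_le (fun n => norm_nonneg _) (fun n => ?_)
      ((summable_rpow_shift (c := α - s.re) (by linarith)).mul_left Ca)
    have hpos : (0:ℝ) < (n:ℝ)+1 := by positivity
    have hcast : ((n:ℂ)+1) = (((n:ℝ)+1 : ℝ) : ℂ) := by push_cast; ring
    rw [norm_mul, hcast,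
      Complex.norm_cpow_eq_rpow_re_of_pos hpos, Complex.neg_re]
    calc ‖A n‖ * ((n:ℝ)+1) ^ (-s.re)
        ≤ (Ca * ((n:ℝ)+1)^α) * ((n:ℝ)+1) ^ (-s.re) :=
          mul_le_mul_of_nonneg_right (hA n) (by positivity)
      _ = Ca * ((n:ℝ)+1) ^ (α - s.re) := by
          rw [sub_eq_add_neg, Real.rpow_add hpos]; ring
  set f : ℝ → ℂ := fun u => ∑' n : ℕ, A n * Real.exp (-((n:ℝ)+1) * u) with hfdef
  have hmelline : ∀ s : ℂ, s.re = σ₁ → mellin f s = h s := by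
    intro s hs
    exact f_mellin_eq hA (by rw [hs]; exact hσ₁pos) (by rw [hs]; exact hα₁)
      (hMhasSum s (by rw [hs]; exact hα₁))
  have hvert₁ : Complex.VerticalIntegrable (mellin f) σ₁ := by
    refine (hIntLine σ₁ hσ₀₁ le_rfl).congr ?_
    filter_upwards with y
    exact (hmelline _ (by simp)).symm
  have hconv : MellinConvergent f (σ₁ : ℂ) := f_mellin_convergent hCa hA hσ₁pos hα₁
  refine ⟨(1/(2*Real.pi)) * ∫ y : ℝ, ‖h ((σ₀:ℂ) + y * I)‖, ?_⟩
  intro x hx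
  have hx0 : (0:ℝ) < x := by linarith
  set t : ℝ := x⁻¹ with htdef
  have ht : 0 < t := by positivity
  have ht0 : (t:ℂ) ≠ 0 := Complex.ofReal_ne_zero.mpr ht.ne'
  have htx : ∀ σ : ℝ, t ^ (-σ) = x ^ σ := by
    intro σ
    rw [htdef, ← Real.rpow_neg_one x, ← Real.rpow_mul hx0.le]
    norm_num
  have hS : ((∑' n : ℕ, a (n + 1) * Real.exp (-((n : ℝ) + 1) / x) : ℝ) : ℂ) = f t := by
    rw [Complex.ofReal_tsum]
    refine tsum_congr (fun n => ?_)
    rw [Complex.ofReal_mul]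
    congr 2
  have hinv := mellinInv_mellin_eq σ₁ f (x := t) ht hconv hvert₁ (f_continuousAt hCa hA ht)
  set H : ℂ → ℂ := fun s => (t:ℂ) ^ (-s) * h s with hHdef
  have hHnorm : ∀ s : ℂ, ‖H s‖ = x ^ s.re * ‖h s‖ := by
    intro s
    rw [hHdef]
    simp only [norm_mul]
    congr 1
    rw [Complex.norm_cpow_eq_rpow_re_of_pos ht, Complex.neg_re, htx]
  have hHd : ∀ s : ℂ, σ₀ ≤ s.re → s.re ≤ σ₁ → DifferentiableAt ℂ H s := by
    intro s h0 h1
    exact (differentiableAt_id.neg.const_cpow (Or.inl ht0)).mul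
      (hdiff s (lt_of_lt_of_le hrσ₀ h0))
  have hHdecay : ∀ s : ℂ, σ₀ ≤ s.re → s.re ≤ σ₁ → 1 ≤ |s.im| →
      ‖H s‖ ≤ x ^ σ₁ * (cΓ * CM) / s.im ^ 2 := by
    intro s h0 h1 h2
    have e1 : ‖H s‖ = x ^ s.re * ‖h s‖ := hHnorm s
    rw [e1]
    have e2 : x ^ s.re ≤ x ^ σ₁ := Real.rpow_le_rpow_of_exponent_le hx h1
    calc x ^ s.re * ‖h s‖ ≤ x ^ σ₁ * (cΓ * CM / s.im ^ 2) :=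
          mul_le_mul e2 (hdecay_h s h0 h1 h2) (norm_nonneg _)
            (Real.rpow_nonneg hx0.le _)
      _ = x ^ σ₁ * (cΓ * CM) / s.im ^ 2 := by ring
  have hHint : ∀ σ : ℝ, σ₀ ≤ σ → σ ≤ σ₁ → Integrable (fun y : ℝ => H ((σ:ℂ) + y * I)) := by
    intro σ hσa hσb
    have hcont : Continuous (fun y : ℝ => H ((σ:ℂ) + y * I)) := by
      refine continuous_iff_continuousAt.mpr (fun y => ?_)
      refine (hHd _ ?_ ?_).continuousAt.comp (hlinec σ).continuousAt <;> simp [hσa, hσb]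
    refine Integrable.mono' (g := fun y => x ^ σ * ‖h ((σ:ℂ) + y * I)‖)
      (((hIntLine σ hσa hσb).norm).const_mul _) hcont.aestronglyMeasurable ?_
    filter_upwards with y
    rw [hHnorm]
    simp
  have hshift := vertical_shift (h := H) hσ₀₁ hHd hHdecay (hHint σ₀ le_rfl hσ₀₁)
    (hHint σ₁ hσ₀₁ le_rfl)
  -- final computation
  have habs : |∑' n : ℕ, a (n + 1) * Real.exp (-((n : ℝ) + 1) / x)|
      = ‖f t‖ := by
    rw [← hS, Complex.norm_real, Real.norm_eq_abs]
  rw [habs, ← hinv]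
  have hint_eq : (∫ y : ℝ, (t:ℂ) ^ (-((σ₁:ℂ) + y * I)) • mellin f ((σ₁:ℂ) + y * I))
      = ∫ y : ℝ, H ((σ₁:ℂ) + y * I) := by
    refine integral_congr_ae (Eventually.of_forall (fun y => ?_))
    simp only [smul_eq_mul]
    rw [hmelline _ (by simp)]
  rw [mellinInv, hint_eq, ← hshift]
  have hπ : (0:ℝ) < 2 * Real.pi := by positivity
  have h1 : ‖∫ y : ℝ, H ((σ₀:ℂ) + y * I)‖ ≤ ∫ y : ℝ, ‖H ((σ₀:ℂ) + y * I)‖ :=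
    norm_integral_le_integral_norm _
  have h2 : (∫ y : ℝ, ‖H ((σ₀:ℂ) + y * I)‖) = x ^ σ₀ * ∫ y : ℝ, ‖h ((σ₀:ℂ) + y * I)‖ := by
    rw [← MeasureTheory.integral_const_mul]
    refine integral_congr_ae (Eventually.of_forall (fun y => ?_))
    simp only [hHnorm]
    simp
  have h3 : (0:ℝ) ≤ ∫ y : ℝ, ‖h ((σ₀:ℂ) + y * I)‖ := integral_nonneg (fun y => norm_nonneg _)
  have habs2 : ‖(1 / (2 * Real.pi)) • ∫ y : ℝ, H ((σ₀:ℂ) + y * I)‖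
      = |1 / (2 * Real.pi)| * ‖∫ y : ℝ, H ((σ₀:ℂ) + y * I)‖ := by
    rw [norm_smul, Real.norm_eq_abs]
  rw [habs2, abs_of_pos (by positivity : (0:ℝ) < 1 / (2 * Real.pi))]
  calc 1 / (2 * Real.pi) * ‖∫ y : ℝ, H ((σ₀:ℂ) + y * I)‖
      ≤ 1 / (2 * Real.pi) * (x ^ σ₀ * ∫ y : ℝ, ‖h ((σ₀:ℂ) + y * I)‖) :=
        mul_le_mul_of_nonneg_left (h1.trans (le_of_eq h2)) (by positivity)
    _ = (1 / (2 * Real.pi) * ∫ y : ℝ, ‖h ((σ₀:ℂ) + y * I)‖) * x ^ σ₀ := by ring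
    _ ≤ (1 / (2 * Real.pi) * ∫ y : ℝ, ‖h ((σ₀:ℂ) + y * I)‖) * x ^ (r + ε) := by
        refine mul_le_mul_of_nonneg_left
          (Real.rpow_le_rpow_of_exponent_le hx (by simp only [hσ₀def]; linarith))
          (mul_nonneg (by positivity) h3)
end
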